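/- arXiv:2110.08964 — 10 statements merged into one kernel-verified Lean document; each statement's English description precedes it below -/
import Mathlib

section
/- Let q be a prime power, n ≥ 1, a₁,…,aₙ ∈ F_q and b_{i,j} ∈ F_{q^2} for 1 ≤ i,j ≤ n. The system of equations X_i^{q+1} = a_i (for all i) and X_i X_j^q = b_{i,j} (for all i,j) has at most q+1 solutions (X₁,…,Xₙ) ∈ F_{q^2}ⁿ. -/
/-!
As `q` is coprime to `q² - 1 = #Kˣ`, the map `x ↦ x ^ q` is injective on `K`. If some `aᵢ ≠ 0`,
every solution has `Xᵢ ≠ 0`, and then `Xᵢ Xⱼ^q = bᵢⱼ` determines every `Xⱼ` from `Xᵢ`; so the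
solutions inject into the `(q + 1)`-th roots of `aᵢ`. If all `aᵢ = 0`, only `X = 0` can be a solution.
-/

open Function Polynomial

theorem pow_injective_of_coprime_card_sub_one {G₀ : Type*} [GroupWithZero G₀] {m : ℕ}
    (hm : m ≠ 0) (h : (Nat.card G₀ - 1).Coprime m) : Injective (· ^ m : G₀ → G₀) := by
  have hunits : Injective (· ^ m : G₀ˣ → G₀ˣ) :=
    (Nat.Coprime.pow_left_bijective (by rwa [Nat.card_units])).injective
  intro x y hxy
  simp only at hxy
  rcases eq_or_ne x 0 with rfl | hx
  · exact (pow_eq_zero_iff hm |>.mp (hxy.symm.trans (zero_pow hm))).symm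
  rcases eq_or_ne y 0 with rfl | hy
  · exact pow_eq_zero_iff hm |>.mp (hxy.trans (zero_pow hm))
  simpa using congrArg Units.val (@hunits (Units.mk0 x hx) (Units.mk0 y hy) (Units.ext (by simpa)))

theorem Nat.coprime_sq_sub_one_self {q : ℕ} (hq : 0 < q) : (q ^ 2 - 1).Coprime q :=
  ((Nat.coprime_self_sub_left (Nat.one_le_pow _ _ hq)).mpr
    (Nat.coprime_one_left _)).coprime_dvd_right (dvd_pow_self q two_ne_zero)

theorem ncard_le_of_injOn_eval_of_pow_eq {ι R : Type*} [CommRing R] [IsDomain R]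
    {S : Set (ι → R)} {i : ι} {m : ℕ} {c : R} (hm : 0 < m) (hinj : S.InjOn (· i))
    (hroot : ∀ x ∈ S, x i ^ m = c) : S.ncard ≤ m := by
  classical
  calc S.ncard = ((· i) '' S).ncard := hinj.ncard_image.symm
    _ ≤ (nthRootsFinset m c : Set R).ncard :=
      Set.ncard_le_ncard (by rintro _ ⟨x, hx, rfl⟩; simpa [mem_nthRootsFinset hm] using hroot x hx)
    _ = (nthRootsFinset m c).card := Set.ncard_coe_finset _
    _ ≤ m := by
      rw [nthRootsFinset_def]
      exact (Multiset.toFinset_card_le _).trans (card_nthRoots m c)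

theorem injOn_eval_of_mul_pow_eq {ι M₀ : Type*} [MonoidWithZero M₀] [IsLeftCancelMulZero M₀]
    {q : ℕ} (hq : Injective (· ^ q : M₀ → M₀)) (i : ι) (c : ι → M₀) :
    {x : ι → M₀ | x i ≠ 0 ∧ ∀ j, x i * x j ^ q = c j}.InjOn (· i) := by
  rintro x ⟨hx0, hx⟩ y ⟨-, hy⟩ (hxy : x i = y i)
  funext j
  exact hq (mul_left_cancel₀ hx0 (by rw [hx j, hxy, hy j]))

theorem stmt3_general (q : ℕ)
    (K : Type*) [Field K] [Fintype K] (hK : Fintype.card K = q ^ 2)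
    (n : ℕ) (a : Fin n → K)
    (b : Fin n → Fin n → K) :
    {x : Fin n → K | (∀ i, x i ^ (q + 1) = a i) ∧ ∀ i j, x i * (x j) ^ q = b i j}.ncard
      ≤ q + 1 := by
  have hq : 0 < q := by
    have := hK ▸ Fintype.card_pos (α := K)
    exact Nat.pos_of_ne_zero fun h => by simp [h] at this
  have hpow : Injective (· ^ q : K → K) :=
    pow_injective_of_coprime_card_sub_one hq.ne'
      (by rw [Nat.card_eq_fintype_card, hK]; exact Nat.coprime_sq_sub_one_self hq)
  by_cases ha : ∃ i, a i ≠ 0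
  · obtain ⟨i, hi⟩ := ha
    refine ncard_le_of_injOn_eval_of_pow_eq q.succ_pos
      ((injOn_eval_of_mul_pow_eq hpow i (b i)).mono ?_) fun x hx => hx.1 i
    rintro x ⟨hxa, hxb⟩
    exact ⟨fun h => hi (by rw [← hxa i, h, zero_pow q.succ_ne_zero]), hxb i⟩
  · push Not at ha
    refine (Set.ncard_le_ncard (t := {0}) ?_).trans (by simp)
    rintro x ⟨hxa, -⟩
    funext i
    exact pow_eq_zero_iff q.succ_ne_zero |>.mp ((hxa i).trans (ha i))

/-- The system X_i^{q+1} = a_i, X_i X_j^q = b_{i,j} has at most q+1 solutions in F_{q²}ⁿ. -/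
theorem stmt3 (q : ℕ) (hq : ∃ p n : ℕ, p.Prime ∧ 0 < n ∧ q = p ^ n)
    (K : Type*) [Field K] [Fintype K] (hK : Fintype.card K = q ^ 2)
    (n : ℕ) (hn : 1 ≤ n) (a : Fin n → K) (ha : ∀ i, (a i) ^ q = a i)
    (b : Fin n → Fin n → K) :
    {x : Fin n → K | (∀ i, x i ^ (q + 1) = a i) ∧ ∀ i j, x i * (x j) ^ q = b i j}.ncard
      ≤ q + 1 :=
  stmt3_general q K hK n a b
end

section
/- Let q be a prime power and ℓ ≥ 1. The number of invertible ℓ × ℓ Hermitian matrices over F_{q^2} equals q^{C(ℓ,2)} · ∏_{i=1}^{ℓ} (q^i + (-1)^i). -/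
/-!
Write an invertible Hermitian matrix of size `1 + n` as `[[c, uᴴ], [u, D]]` and count the
admissible `D` for each first column `(c, u)`. If `c ≠ 0`, the Schur complement `D - c⁻¹ u uᴴ`
identifies them with the invertible Hermitian `n × n` matrices. If `c = 0` then `u ≠ 0`;
congruence by `diag(1, P)` moves `u` to the first basis vector, and then the matrix is invertible
iff its trailing `(n - 1) × (n - 1)` block is, the remaining corner entry (self-adjoint) and column
being free. With `k` elements in the field and `r` self-adjoint ones this gives
`N(ℓ + 2) = (r - 1) k^(ℓ+1) N(ℓ + 1) + (k^(ℓ+1) - 1) r k^ℓ N(ℓ)`, a recursion that the closed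
formula satisfies when `k = q²` and `r = q`. Over `𝔽_{q²}` the conjugation is `x ↦ x^q`, whose
fixed points are `0` and the solutions of `x^(q-1) = 1` in the cyclic group `𝔽_{q²}ˣ`.
-/

open Matrix

def starCongr {R : Type*} [Monoid R] [StarMul R] (u : Rˣ) : R ≃ R where
  toFun x := u * x * star (u : R)
  invFun x := ↑u⁻¹ * x * star (↑u⁻¹ : R)
  left_inv x := by simp [mul_assoc, ← star_mul]
  right_inv x := by simp [mul_assoc, ← star_mul]

lemma FiniteField.card_pow_eq_self_of_card_eq_sq {K : Type*} [Field K] [Fintype K] {q : ℕ}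
    (hK : Fintype.card K = q ^ 2) : Nat.card {x : K // x ^ q = x} = q := by
  classical
  have hq : 0 < q := by
    have := hK ▸ Fintype.card_pos (α := K)
    exact Nat.pos_of_ne_zero (by rintro rfl; simp at this)
  have hker : Nat.card (powMonoidHom (q - 1) : Kˣ →* Kˣ).ker = q - 1 := by
    rw [IsCyclic.card_powMonoidHom_ker, Nat.card_eq_fintype_card, Fintype.card_units, hK]
    exact Nat.gcd_eq_right (by simpa using Nat.sub_one_dvd_pow_sub_one q 2)
  have hset : {x : K | x ^ q = x} =
      insert 0 (Units.val '' ((powMonoidHom (q - 1) : Kˣ →* Kˣ).ker : Set Kˣ)) := by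
    ext x
    rcases eq_or_ne x 0 with rfl | hx
    · simp [hq.ne']
    · have : x ^ q = x ^ (q - 1) * x := by rw [← pow_succ, Nat.sub_add_cancel hq]
      simp only [Set.mem_ofPred_eq, Set.mem_insert_iff, hx, false_or, Set.mem_image,
        SetLike.mem_coe, MonoidHom.mem_ker, powMonoidHom_apply, this, mul_eq_right₀ hx]
      constructor
      · intro h
        exact ⟨Units.mk0 x hx, Units.ext (by simpa using h), rfl⟩
      · rintro ⟨u, hu, rfl⟩
        simpa using congrArg Units.val hu
  change Nat.card {x : K | x ^ q = x} = q
  rw [Nat.card_coe_set_eq, hset, Set.ncard_insert_of_notMem (by simp),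
    Set.ncard_image_of_injective _ Units.val_injective, ← Nat.card_coe_set_eq,
    SetLike.coe_sort_coe, hker, Nat.sub_add_cancel hq]

abbrev frobeniusStarRing {K : Type*} [Field K] [Fintype K] (p n : ℕ) [Fact p.Prime] [CharP K p]
    (hK : Fintype.card K = (p ^ n) ^ 2) : StarRing K where
  star x := x ^ p ^ n
  star_involutive x := by
    simp only
    rw [← pow_mul, ← sq, ← hK, FiniteField.pow_card]
  star_mul x y := (mul_pow x y _).trans (mul_comm _ _)
  star_add x y := add_pow_char_pow x y p n

def hermitianCount (q : ℤ) (ℓ : ℕ) : ℤ :=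
  q ^ ℓ.choose 2 * ∏ i ∈ Finset.Icc 1 ℓ, (q ^ i + (-1) ^ i)

lemma hermitianCount_succ (q : ℤ) (ℓ : ℕ) :
    hermitianCount q (ℓ + 1) =
      hermitianCount q ℓ * (q ^ ℓ * (q ^ (ℓ + 1) + (-1) ^ (ℓ + 1))) := by
  simp only [hermitianCount, Nat.choose_succ_succ', Nat.choose_one_right,
    Finset.prod_Icc_succ_top (Nat.le_add_left 1 ℓ), pow_add]
  ring

lemma hermitianCount_add_two (q : ℤ) (ℓ : ℕ) :
    hermitianCount q (ℓ + 2) = (q - 1) * ((q ^ 2) ^ (ℓ + 1) * hermitianCount q (ℓ + 1)) +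
      ((q ^ 2) ^ (ℓ + 1) - 1) * (q * ((q ^ 2) ^ ℓ * hermitianCount q ℓ)) := by
  have hs : ((-1 : ℤ) ^ ℓ) ^ 2 = 1 := by rw [← pow_mul, mul_comm, pow_mul]; simp
  rw [hermitianCount_succ, hermitianCount_succ]
  linear_combination (-(hermitianCount q ℓ * q * (q ^ ℓ) ^ 2)) * hs

namespace Matrix

lemma IsHermitian.fromBlocks_toBlocks {K s n : Type*} [Star K]
    {H : Matrix (s ⊕ n) (s ⊕ n) K} (hH : H.IsHermitian) :
    Matrix.fromBlocks H.toBlocks₁₁ H.toBlocks₂₁ᴴ H.toBlocks₂₁ H.toBlocks₂₂ = H := by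
  conv_rhs => rw [← Matrix.fromBlocks_toBlocks H]
  congr
  ext i j
  exact hH.apply _ _

variable {K : Type*} [Field K]

lemma exists_isUnit_mul_eq {n : Type*} [Fintype n] [DecidableEq n] {B B' : Matrix n Unit K}
    (hB : B ≠ 0) (hB' : B' ≠ 0) : ∃ P : Matrix n n K, IsUnit P ∧ P * B = B' := by
  have col_ne_zero {C : Matrix n Unit K} (hC : C ≠ 0) : (fun i => C i ()) ≠ 0 :=
    fun h => hC (by ext i ⟨⟩; exact congrFun h i)
  obtain ⟨g, hg⟩ := Submodule.exists_linearEquiv_restrict_eq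
    (LinearEquiv.coord K _ _ (col_ne_zero hB) ≪≫ₗ
      LinearEquiv.toSpanNonzeroSingleton K _ _ (col_ne_zero hB'))
  refine ⟨LinearMap.toMatrix' g.toLinearMap, LinearMap.isUnit_toMatrix'_iff.2 ?_, ?_⟩
  · exact (Module.End.isUnit_iff _).2 g.bijective
  · have hu := hg ⟨_, Submodule.mem_span_singleton_self (fun i => B i ())⟩
    simp only [LinearEquiv.trans_apply, LinearEquiv.coord_self,
      LinearEquiv.toSpanNonzeroSingleton_one] at hu
    ext i ⟨⟩
    exact congrFun ((LinearMap.toMatrix'_mulVec _ _).trans hu.symm) i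

variable [StarRing K]

variable (K) in
def hermitianUnits (n : Type*) [Fintype n] [DecidableEq n] : Set (Matrix n n K) :=
  {H | H.IsHermitian ∧ IsUnit H}

variable {n n' s m : Type*} [Fintype n] [DecidableEq n] [Fintype n'] [DecidableEq n']
  [Fintype s] [DecidableEq s] [Fintype m] [DecidableEq m]

lemma mul_mul_star_mem_hermitianUnits_iff (U : (Matrix n n K)ˣ) {H : Matrix n n K} :
    (U : Matrix n n K) * H * star (U : Matrix n n K) ∈ hermitianUnits K n ↔
      H ∈ hermitianUnits K n := by
  simp only [hermitianUnits, Set.mem_ofPred_eq, isHermitian_iff_isSelfAdjoint,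
    U.isUnit.isSelfAdjoint_conjugate_iff]
  rw [← Units.coe_star, Units.isUnit_mul_units, Units.isUnit_units_mul]

lemma card_hermitianUnits_congr (h : Fintype.card n = Fintype.card n') :
    Nat.card (hermitianUnits K n) = Nat.card (hermitianUnits K n') :=
  let e := Fintype.equivOfCardEq h
  Nat.card_congr <| (reindex e e).subtypeEquiv fun H => by
    simp [hermitianUnits, isUnit_iff_isUnit_det, reindex_apply, isHermitian_submatrix_equiv]

lemma card_hermitianUnits_of_isEmpty [IsEmpty n] : Nat.card (hermitianUnits K n) = 1 := by
  rw [Nat.card_eq_one_iff_unique]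
  exact ⟨⟨fun _ _ => Subtype.ext (Subsingleton.elim _ _)⟩,
    ⟨⟨1, isHermitian_one, isUnit_one⟩⟩⟩

def hermitianUnitCompletions (T : Matrix s s K) (B : Matrix n s K) : Set (Matrix n n K) :=
  {D | fromBlocks T Bᴴ B D ∈ hermitianUnits K (s ⊕ n)}

lemma card_hermitianUnits_eq_sum [Fintype K] :
    Nat.card (hermitianUnits K (s ⊕ n)) =
      ∑ T : Matrix s s K, ∑ B : Matrix n s K, Nat.card (hermitianUnitCompletions T B) := by
  let e : hermitianUnits K (s ⊕ n) ≃
      Σ p : Matrix s s K × Matrix n s K, hermitianUnitCompletions p.1 p.2 :=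
    { toFun H := ⟨(H.1.toBlocks₁₁, H.1.toBlocks₂₁), H.1.toBlocks₂₂, by
        simpa only [hermitianUnitCompletions, Set.mem_ofPred_eq, H.2.1.fromBlocks_toBlocks]
          using H.2⟩
      invFun x := ⟨fromBlocks x.1.1 x.1.2ᴴ x.1.2 x.2, x.2.2⟩
      left_inv H := Subtype.ext H.2.1.fromBlocks_toBlocks
      right_inv x := Sigma.subtype_ext (by simp) (by simp) }
  rw [Nat.card_congr e, Nat.card_sigma, Fintype.sum_prod_type]

lemma card_hermitianUnitCompletions_of_isUnit {T : Matrix s s K} (hT : T.IsHermitian)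
    (hTu : IsUnit T) (B : Matrix n s K) :
    Nat.card (hermitianUnitCompletions T B) = Nat.card (hermitianUnits K n) := by
  let := hTu.invertible
  have hS : (B * T⁻¹ * Bᴴ).IsHermitian := isHermitian_mul_mul_conjTranspose B hT.inv
  refine Nat.card_congr ((Equiv.subRight (B * T⁻¹ * Bᴴ)).subtypeEquiv fun D => ?_)
  simp only [hermitianUnitCompletions, hermitianUnits, Set.mem_ofPred_eq,
    isHermitian_fromBlocks_iff, conjTranspose_conjTranspose,
    isUnit_iff_isUnit_det (fromBlocks _ _ _ _), det_fromBlocks₁₁, invOf_eq_nonsing_inv,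
    Equiv.subRight_apply, IsUnit.mul_iff, isUnit_det_of_invertible, hT, true_and]
  rw [← isUnit_iff_isUnit_det]
  exact and_congr_left' ⟨fun h => h.sub hS, fun h => by simpa using h.add hS⟩

lemma card_hermitianUnitCompletions_mul {P : Matrix n n K} (hP : IsUnit P) (T : Matrix s s K)
    (B : Matrix n s K) :
    Nat.card (hermitianUnitCompletions T (P * B)) = Nat.card (hermitianUnitCompletions T B) := by
  have hdet := (isUnit_iff_isUnit_det P).mp hP
  let Q : (Matrix (s ⊕ n) (s ⊕ n) K)ˣ :=
    ⟨fromBlocks 1 0 0 P, fromBlocks 1 0 0 P⁻¹,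
      by simp [fromBlocks_multiply, mul_nonsing_inv _ hdet],
      by simp [fromBlocks_multiply, nonsing_inv_mul _ hdet]⟩
  have hQ (D : Matrix n n K) :
      (Q : Matrix (s ⊕ n) (s ⊕ n) K) * fromBlocks T Bᴴ B D *
          star (Q : Matrix (s ⊕ n) (s ⊕ n) K) =
        fromBlocks T (P * B)ᴴ (P * B) (P * D * star P) := by
    simp [Q, star_eq_conjTranspose, fromBlocks_conjTranspose, fromBlocks_multiply,
      conjTranspose_mul, Matrix.mul_assoc]
  refine (Nat.card_congr ((starCongr hP.unit).subtypeEquiv fun D => ?_)).symm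
  simp only [hermitianUnitCompletions, Set.mem_ofPred_eq, starCongr, Equiv.coe_fn_mk,
    IsUnit.unit_spec, ← hQ, mul_mul_star_mem_hermitianUnits_iff]

lemma hermitianUnitCompletions_of_not_isHermitian {T : Matrix s s K} (hT : ¬T.IsHermitian)
    (B : Matrix n s K) : hermitianUnitCompletions T B = ∅ := by
  ext D
  simp_all [hermitianUnitCompletions, hermitianUnits, isHermitian_fromBlocks_iff]

lemma hermitianUnitCompletions_zero_zero [Nonempty s] :
    hermitianUnitCompletions (0 : Matrix s s K) (0 : Matrix n s K) = ∅ := by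
  ext D
  simp [hermitianUnitCompletions, hermitianUnits, isUnit_iff_isUnit_det, det_fromBlocks_zero₂₁]

lemma isUnit_fromBlocks_zero_fromRows_iff (A : Matrix (s ⊕ m) (s ⊕ m) K) :
    IsUnit (fromBlocks 0 (fromRows (1 : Matrix s s K) (0 : Matrix m s K))ᴴ
      (fromRows (1 : Matrix s s K) (0 : Matrix m s K)) A) ↔ IsUnit A.toBlocks₂₂ := by
  -- swapping the two copies of `s` among the columns makes the matrix block triangular
  let σ : Equiv.Perm (s ⊕ (s ⊕ m)) := (Equiv.sumAssoc s s m).symm.trans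
    (((Equiv.sumComm s s).sumCongr (Equiv.refl m)).trans (Equiv.sumAssoc s s m))
  have h : (fromBlocks 0 (fromRows (1 : Matrix s s K) (0 : Matrix m s K))ᴴ
      (fromRows (1 : Matrix s s K) (0 : Matrix m s K)) A).submatrix id σ =
        fromBlocks 1 0 (A.submatrix id Sum.inl)
          (fromBlocks 1 A.toBlocks₁₂ 0 A.toBlocks₂₂) := by
    ext (i | i | i) (j | j | j) <;>
      simp [σ, conjTranspose_fromRows_eq_fromCols_conjTranspose, one_apply, toBlocks₁₂,
        toBlocks₂₂]
  have hdet := congrArg det h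
  rw [det_permute', det_fromBlocks_zero₁₂, det_fromBlocks_zero₂₁, det_one, one_mul,
    one_mul] at hdet
  rw [isUnit_iff_isUnit_det, isUnit_iff_isUnit_det, ← hdet, IsUnit.mul_iff]
  exact (and_iff_right ((Equiv.Perm.sign σ).isUnit.map (Int.castRingHom K))).symm

lemma card_hermitianUnitCompletions_zero_fromRows :
    Nat.card (hermitianUnitCompletions (0 : Matrix s s K)
      (fromRows (1 : Matrix s s K) (0 : Matrix m s K))) =
        Nat.card {T : Matrix s s K // T.IsHermitian} *
          (Nat.card (Matrix m s K) * Nat.card (hermitianUnits K m)) := by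
  have hmem (D : Matrix (s ⊕ m) (s ⊕ m) K) :
      D ∈ hermitianUnitCompletions 0 (fromRows (1 : Matrix s s K) (0 : Matrix m s K)) ↔
        D.IsHermitian ∧ IsUnit D.toBlocks₂₂ := by
    simp [hermitianUnitCompletions, hermitianUnits, isHermitian_fromBlocks_iff,
      isUnit_fromBlocks_zero_fromRows_iff]
  let e : hermitianUnitCompletions (0 : Matrix s s K)
      (fromRows (1 : Matrix s s K) (0 : Matrix m s K)) ≃
        {T : Matrix s s K // T.IsHermitian} × Matrix m s K × hermitianUnits K m :=
    { toFun D := (⟨D.1.toBlocks₁₁, ((hmem D).1 D.2).1.submatrix Sum.inl⟩,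
        D.1.toBlocks₂₁,
        ⟨D.1.toBlocks₂₂, ((hmem D).1 D.2).1.submatrix Sum.inr, ((hmem D).1 D.2).2⟩)
      invFun x := ⟨fromBlocks x.1 x.2.1ᴴ x.2.1 x.2.2, (hmem _).2
        ⟨x.1.2.fromBlocks (conjTranspose_conjTranspose _) x.2.2.2.1,
          by simpa using x.2.2.2.2⟩⟩
      left_inv D := Subtype.ext ((hmem D).1 D.2).1.fromBlocks_toBlocks
      right_inv x := by simp }
  rw [Nat.card_congr e, Nat.card_prod, Nat.card_prod]

lemma card_isHermitian_unit :
    Nat.card {T : Matrix Unit Unit K // T.IsHermitian} = Nat.card (selfAdjoint K) := by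
  have hT (T : Matrix Unit Unit K) : T.IsHermitian ↔ star (T () ()) = T () () := by
    simp [IsHermitian.ext_iff, Unique.forall_iff]
  exact Nat.card_congr
    { toFun T := ⟨T.1 () (), selfAdjoint.mem_iff.2 ((hT T).1 T.2)⟩
      invFun c := ⟨of fun _ _ => c, (hT _).2 (selfAdjoint.mem_iff.1 c.2)⟩
      left_inv T := Subtype.ext (by ext; rfl)
      right_inv c := rfl }

theorem card_hermitianUnits_unit_sum [Fintype K] (F : ℕ)
    (hF : ∀ B : Matrix n Unit K, B ≠ 0 → Nat.card (hermitianUnitCompletions 0 B) = F) :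
    Nat.card (hermitianUnits K (Unit ⊕ n)) =
      (Nat.card (selfAdjoint K) - 1) *
          (Nat.card (Matrix n Unit K) * Nat.card (hermitianUnits K n)) +
        (Nat.card (Matrix n Unit K) - 1) * F := by
  classical
  rw [card_hermitianUnits_eq_sum, Fintype.sum_eq_add_sum_compl 0, add_comm]
  congr 1
  · have hT (T : Matrix Unit Unit K) (hT0 : T ∈ ({0}ᶜ : Finset _)) :
        ∑ B : Matrix n Unit K, Nat.card (hermitianUnitCompletions T B) =
          if T.IsHermitian then Nat.card (Matrix n Unit K) * Nat.card (hermitianUnits K n)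
          else 0 := by
      split_ifs with hT
      · have hTu : IsUnit T := by
          rw [isUnit_iff_isUnit_det, det_unique, isUnit_iff_ne_zero]
          exact fun h =>
            Finset.mem_compl.1 hT0 (Finset.mem_singleton.2 (by ext ⟨⟩ ⟨⟩; exact h))
        simp only [card_hermitianUnitCompletions_of_isUnit hT hTu, Finset.sum_const,
          Finset.card_univ, smul_eq_mul, Nat.card_eq_fintype_card (α := Matrix n Unit K)]
      · simp [hermitianUnitCompletions_of_not_isHermitian hT]
    rw [Finset.sum_congr rfl hT, Finset.sum_ite, Finset.sum_const_zero, add_zero,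
      Finset.sum_const, smul_eq_mul, ← card_isHermitian_unit,
      Nat.card_eq_fintype_card (α := {T : Matrix Unit Unit K // _}), Fintype.card_subtype,
      ← Finset.card_erase_of_mem
        (by simp : (0 : Matrix Unit Unit K) ∈ Finset.univ.filter (·.IsHermitian))]
    congr 2
    ext
    simp [and_comm]
  · rw [Fintype.sum_eq_add_sum_compl 0, hermitianUnitCompletions_zero_zero, Nat.card_of_isEmpty,
      zero_add, Finset.sum_congr rfl fun B hB => hF B (by simpa using hB), Finset.sum_const,
      Finset.card_compl, Finset.card_singleton, smul_eq_mul, Nat.card_eq_fintype_card]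

theorem card_hermitianUnits_fin [Fintype K] {q : ℕ} (hk : Fintype.card K = q ^ 2)
    (hr : Nat.card (selfAdjoint K) = q) (ℓ : ℕ) :
    (Nat.card (hermitianUnits K (Fin ℓ)) : ℤ) = hermitianCount q ℓ := by
  classical
  have hq : 1 ≤ q := hr ▸ Nat.card_pos
  have hcol (n : Type) [Fintype n] : Nat.card (Matrix n Unit K) = (q ^ 2) ^ Fintype.card n := by
    simp [Matrix, hk]
  induction ℓ using Nat.twoStepInduction with
  | zero => rw [card_hermitianUnits_of_isEmpty]; simp [hermitianCount]
  | one =>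
    rw [card_hermitianUnits_congr (n := Fin 1) (n' := Unit ⊕ Fin 0) rfl,
      card_hermitianUnits_unit_sum 0 fun B hB => (hB (Subsingleton.elim _ _)).elim, hr,
      card_hermitianUnits_of_isEmpty, hcol]
    simp [hermitianCount, Nat.cast_sub hq, sub_eq_add_neg]
  | more ℓ ih₀ ih₁ =>
    have hF (B : Matrix (Unit ⊕ Fin ℓ) Unit K) (hB : B ≠ 0) :
        Nat.card (hermitianUnitCompletions 0 B) =
          q * ((q ^ 2) ^ ℓ * Nat.card (hermitianUnits K (Fin ℓ))) := by
      obtain ⟨P, hP, hPB⟩ := exists_isUnit_mul_eq hB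
        (B' := fromRows (1 : Matrix Unit Unit K) (0 : Matrix (Fin ℓ) Unit K))
        (fun h => one_ne_zero (congrArg toRows₁ h))
      rw [← card_hermitianUnitCompletions_mul hP, hPB,
        card_hermitianUnitCompletions_zero_fromRows, card_isHermitian_unit, hr, hcol,
        Fintype.card_fin]
    rw [card_hermitianUnits_congr (n' := Unit ⊕ (Unit ⊕ Fin ℓ)) (by simp; omega),
      card_hermitianUnits_unit_sum _ hF, hr, hcol,
      card_hermitianUnits_congr (n := Unit ⊕ Fin ℓ) (n' := Fin (ℓ + 1)) (by simp; omega)]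
    have hk1 : 1 ≤ (q ^ 2) ^ Fintype.card (Unit ⊕ Fin ℓ) := Nat.one_le_pow _ _ (by positivity)
    push_cast [Nat.cast_sub hq, Nat.cast_sub hk1, ih₀, ih₁]
    simp only [Fintype.card_sum, Fintype.card_unit, Fintype.card_fin, add_comm 1 ℓ]
    exact (hermitianCount_add_two q ℓ).symm

end Matrix

theorem stmt5_general (q ℓ : ℕ) (hq : ∃ p n : ℕ, p.Prime ∧ 0 < n ∧ q = p ^ n)
    (K : Type*) [Field K] [Fintype K] (hK : Fintype.card K = q ^ 2) :
    ({H : Matrix (Fin ℓ) (Fin ℓ) K | (∀ i j, H j i = (H i j) ^ q) ∧ IsUnit H}.ncard : ℤ)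
      = (q : ℤ) ^ (ℓ.choose 2) * ∏ i ∈ Finset.Icc 1 ℓ, ((q : ℤ) ^ i + (-1) ^ i) := by
  obtain ⟨p, n, hp, -, rfl⟩ := hq
  have := Fact.mk hp
  have := charP_of_card_eq_prime_pow (hK.trans (pow_mul p n 2).symm)
  let := frobeniusStarRing p n hK
  have hset : {H : Matrix (Fin ℓ) (Fin ℓ) K | (∀ i j, H j i = H i j ^ p ^ n) ∧ IsUnit H} =
      hermitianUnits K (Fin ℓ) := by
    ext H
    simp only [hermitianUnits, Set.mem_ofPred_eq, IsHermitian.ext_iff]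
    rw [forall_comm]
    simp only [eq_comm]
    rfl
  rw [hset, ← Nat.card_coe_set_eq]
  exact card_hermitianUnits_fin hK (FiniteField.card_pow_eq_self_of_card_eq_sq hK) ℓ

/-- The number of invertible ℓ×ℓ Hermitian matrices over F_{q²} is
    q^{C(ℓ,2)} ∏_{i=1}^{ℓ} (q^i + (-1)^i). -/
theorem stmt5 (q ℓ : ℕ) (hq : ∃ p n : ℕ, p.Prime ∧ 0 < n ∧ q = p ^ n) (hℓ : 1 ≤ ℓ)
    (K : Type*) [Field K] [Fintype K] (hK : Fintype.card K = q ^ 2) :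
    ({H : Matrix (Fin ℓ) (Fin ℓ) K | (∀ i j, H j i = (H i j) ^ q) ∧ IsUnit H}.ncard : ℤ)
      = (q : ℤ) ^ (ℓ.choose 2) * ∏ i ∈ Finset.Icc 1 ℓ, ((q : ℤ) ^ i + (-1) ^ i) :=
  stmt5_general q ℓ hq K hK
end

section
/- Let q be a prime power and ℓ = 2. Consider f(X₁,X₂,X₃) = f₀ + f₁X₁ + f₂X₂ + f₂^qX₂^q + f₃X₃ + (X₁X₃ − X₂^{q+1}) evaluated over 2×2 Hermitian matrices (X₁,X₃ ∈ F_q, X₂ ∈ F_{q^2}), with f₀,f₁,f₃ ∈ F_q and f₂ ∈ F_{q^2}. Then the number of Hermitian matrices on which f is nonzero is at least q⁴ − q³ − q. -/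
/-!
The matrices `(x₁, x₂, x₃)` with `x₁, x₃` in `F = {x | x ^ q = x}` number `q⁴`, because `F` is
the set of roots of `X ^ q - X`, a divisor of `X ^ (q ^ 2) - X = ∏_{a ∈ K} (X - a)`.
Writing `f = (x₁ + f₃) x₃ + h(x₁, x₂)`, a zero with `x₁ ≠ -f₃` is determined by `(x₁, x₂)`, which
gives at most `(q - 1) q²` zeros, while on the line `x₁ = -f₃` (it meets `F` since `-f₃ ∈ F`) the
value `h(-f₃, x₂)` is a nonzero polynomial of degree `q + 1` in `x₂`, which gives at most
`(q + 1) q` zeros. So `f` vanishes on at most `q³ + q` of them.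
-/

open Finset Polynomial

theorem Polynomial.card_filter_isRoot_le {R : Type*} [CommRing R] [IsDomain R] [Fintype R]
    [DecidableEq R] {g : R[X]} (hg : g ≠ 0) : #{x | g.IsRoot x} ≤ g.natDegree :=
  card_le_degree_of_subset_roots fun x hx => by simpa [mem_roots hg] using hx

theorem pow_sub_self_dvd_pow_sub_self {R : Type*} [CommRing R] (r : R) {m n : ℕ} (hm : 1 ≤ m)
    (hn : 1 ≤ n) (hmn : m - 1 ∣ n - 1) : r ^ m - r ∣ r ^ n - r := by
  have factor : ∀ k, 1 ≤ k → r ^ k - r = r * (r ^ (k - 1) - 1) := fun k hk => by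
    rw [mul_sub, ← pow_succ', Nat.sub_add_cancel hk, mul_one]
  rw [factor m hm, factor n hn]
  exact mul_dvd_mul_left r (dvd_pow_sub_one_of_dvd hmn)

theorem FiniteField.card_filter_pow_eq_self {K : Type*} [Field K] [Fintype K] [DecidableEq K]
    {q : ℕ} (hq : 1 < q) (hdvd : q - 1 ∣ Fintype.card K - 1) : #{x : K | x ^ q = x} = q := by
  have hne : (X ^ q - X : K[X]) ≠ 0 := FiniteField.X_pow_card_sub_X_ne_zero K hq
  have hdvdX : (X ^ q - X : K[X]) ∣ X ^ Fintype.card K - X :=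
    pow_sub_self_dvd_pow_sub_self X hq.le Fintype.card_pos hdvd
  have hroots : (X ^ q - X : K[X]).roots ≤ univ.val :=
    FiniteField.roots_X_pow_card_sub_X K ▸
      roots.le_of_dvd (FiniteField.X_pow_card_sub_X_ne_zero K Fintype.one_lt_card) hdvdX
  have hsplits : (X ^ q - X : K[X]).Splits := by
    refine Splits.of_dvd ?_ (FiniteField.X_pow_card_sub_X_ne_zero K Fintype.one_lt_card) hdvdX
    rw [splits_iff_card_roots, FiniteField.roots_X_pow_card_sub_X,
      FiniteField.X_pow_card_sub_X_natDegree_eq K Fintype.one_lt_card]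
    rfl
  have hfilter : ({x : K | x ^ q = x} : Finset K) = (X ^ q - X : K[X]).roots.toFinset := by
    ext x
    simp [mem_roots hne, sub_eq_zero]
  rw [hfilter, Multiset.toFinset_card_of_nodup (Multiset.nodup_of_le hroots univ.nodup),
    splits_iff_card_roots.mp hsplits, FiniteField.X_pow_card_sub_X_natDegree_eq K hq]

theorem card_filter_add_mul_add_mul_pow_sub_pow_succ_eq_zero_le {K : Type*} [Field K] [Fintype K]
    [DecidableEq K] {q : ℕ} (hq : 1 ≤ q) (a b c : K) :
    #{x : K | a + b * x + c * x ^ q - x ^ (q + 1) = 0} ≤ q + 1 := by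
  set g : K[X] := X ^ (q + 1) - (C c * X ^ q + C b * X + C a)
  have hmonic : g.Monic := monic_X_pow_sub <|
    (degree_le_of_natDegree_le (n := q) (by compute_degree!)).trans_lt (mod_cast q.lt_succ_self)
  calc #{x : K | a + b * x + c * x ^ q - x ^ (q + 1) = 0}
      = #{x | g.IsRoot x} := by
        congr 1; refine filter_congr fun x _ => ?_
        simp only [g, IsRoot, eval_sub, eval_add, eval_mul, eval_pow, eval_C, eval_X]
        constructor <;> intro hx <;> linear_combination -hx
    _ ≤ g.natDegree := card_filter_isRoot_le hmonic.ne_zero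
    _ ≤ q + 1 := by simp only [g]; compute_degree

section ZerosAffineInLastVariable

variable {K : Type*} [Field K] [Fintype K] [DecidableEq K] (F : Finset K) (c : K) (h : K → K → K)

theorem card_filter_mul_add_eq_zero_and_ne_le :
    #{x ∈ F ×ˢ univ ×ˢ F | (x.1 + c) * x.2.2 + h x.1 x.2.1 = 0 ∧ x.1 ≠ -c}
      ≤ #(F.erase (-c)) * Fintype.card K := by
  rw [← card_univ, ← card_product]
  refine card_le_card_of_injOn (fun x => (x.1, x.2.1)) (fun x hx => ?_) fun x hx y hy hxy => ?_
  · simp only [coe_filter, mem_product, Set.mem_ofPred_eq] at hx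
    simp [hx.2.2, hx.1.1]
  · simp only [coe_filter, mem_product, Set.mem_ofPred_eq] at hx hy
    obtain ⟨h1, h2⟩ := Prod.mk.inj hxy
    have hx1 : x.1 + c ≠ 0 := fun h0 => hx.2.2 (eq_neg_of_add_eq_zero_left h0)
    have h3 : x.2.2 = y.2.2 := mul_left_cancel₀ hx1 <| by
      rw [h1, h2] at hx
      rw [h1]
      linear_combination hx.2.1 - hy.2.1
    exact Prod.ext h1 (Prod.ext h2 h3)

theorem card_filter_mul_add_eq_zero_and_eq_le :
    #{x ∈ F ×ˢ univ ×ˢ F | (x.1 + c) * x.2.2 + h x.1 x.2.1 = 0 ∧ x.1 = -c}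
      ≤ #{y | h (-c) y = 0} * #F := by
  rw [← card_product]
  refine card_le_card_of_injOn (fun x => (x.2.1, x.2.2)) (fun x hx => ?_) fun x hx y hy hxy => ?_
  · simp only [coe_filter, mem_product, Set.mem_ofPred_eq] at hx
    obtain ⟨⟨-, -, hx3⟩, hzero, hx1⟩ := hx
    rw [hx1, neg_add_cancel, zero_mul, zero_add] at hzero
    simp [hzero, hx3]
  · simp only [coe_filter, mem_product, Set.mem_ofPred_eq] at hx hy
    obtain ⟨h2, h3⟩ := Prod.mk.inj hxy
    exact Prod.ext (hx.2.2.trans hy.2.2.symm) (Prod.ext h2 h3)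

theorem card_filter_mul_add_eq_zero_le (hc : -c ∈ F) {d : ℕ} (hd : #{y | h (-c) y = 0} ≤ d) :
    #{x ∈ F ×ˢ univ ×ˢ F | (x.1 + c) * x.2.2 + h x.1 x.2.1 = 0}
      ≤ (#F - 1) * Fintype.card K + d * #F := by
  rw [← card_filter_add_card_filter_not (fun x : K × K × K => x.1 = -c), filter_filter,
    filter_filter, add_comm]
  gcongr
  · rw [← card_erase_of_mem hc]
    exact card_filter_mul_add_eq_zero_and_ne_le F c h
  · exact (card_filter_mul_add_eq_zero_and_eq_le F c h).trans (Nat.mul_le_mul_right _ hd)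

end ZerosAffineInLastVariable

theorem FiniteField.neg_one_pow_eq_neg_one_of_dvd_card {K : Type*} [Field K] [Fintype K] {q : ℕ}
    (hq : q ∣ Fintype.card K) : (-1 : K) ^ q = -1 := by
  rcases Nat.even_or_odd q with heven | hodd
  · have hchar : ringChar K = 2 :=
      FiniteField.even_card_iff_char_two.mpr (Nat.mod_eq_zero_of_dvd (heven.two_dvd.trans hq))
    rw [neg_one_eq_one_iff.mpr hchar, one_pow]
  · exact hodd.neg_one_pow

theorem stmt9_general (q : ℕ)
    (K : Type*) [Field K] [Fintype K] (hK : Fintype.card K = q ^ 2)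
    (f0 f1 f3 : K) (h3 : f3 ^ q = f3)
    (f2 : K) :
    q ^ 4 - q ^ 3 - q ≤
      {x : K × K × K | x.1 ^ q = x.1 ∧ x.2.2 ^ q = x.2.2 ∧
        f0 + f1 * x.1 + f2 * x.2.1 + f2 ^ q * x.2.1 ^ q + f3 * x.2.2
          + (x.1 * x.2.2 - x.2.1 ^ (q + 1)) ≠ 0}.ncard := by
  classical
  have hq : 1 < q := (Nat.one_lt_pow_iff two_ne_zero).mp (hK ▸ Fintype.one_lt_card)
  set F : Finset K := {x | x ^ q = x}
  have hF : #F = q :=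
    FiniteField.card_filter_pow_eq_self hq (hK ▸ Nat.sub_one_dvd_pow_sub_one q 2)
  have hf3 : -f3 ∈ F := by
    rw [mem_filter, neg_pow, h3, FiniteField.neg_one_pow_eq_neg_one_of_dvd_card
      (hK ▸ dvd_pow_self q two_ne_zero), neg_one_mul]
    exact ⟨mem_univ _, rfl⟩
  set H : Finset (K × K × K) := F ×ˢ univ ×ˢ F
  set h : K → K → K := fun x₁ x₂ => f0 + f1 * x₁ + f2 * x₂ + f2 ^ q * x₂ ^ q - x₂ ^ (q + 1)
  have hH : #H = q ^ 4 := by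
    rw [card_product, card_product, card_univ, hF, hK]; ring
  have hzeros : #{x ∈ H | (x.1 + f3) * x.2.2 + h x.1 x.2.1 = 0} ≤ q ^ 3 + q :=
    calc _ ≤ (q - 1) * q ^ 2 + (q + 1) * q := by
          simpa only [hF, hK] using card_filter_mul_add_eq_zero_le F f3 h hf3
            (card_filter_add_mul_add_mul_pow_sub_pow_succ_eq_zero_le (K := K) hq.le _ f2 (f2 ^ q))
      _ = q ^ 3 + q := by zify [hq.le]; ring
  have hf : ∀ x : K × K × K, f0 + f1 * x.1 + f2 * x.2.1 + f2 ^ q * x.2.1 ^ q + f3 * x.2.2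
      + (x.1 * x.2.2 - x.2.1 ^ (q + 1)) = (x.1 + f3) * x.2.2 + h x.1 x.2.1 := fun x => by
    simp only [h]; ring
  have hset : {x : K × K × K | x.1 ^ q = x.1 ∧ x.2.2 ^ q = x.2.2 ∧
      f0 + f1 * x.1 + f2 * x.2.1 + f2 ^ q * x.2.1 ^ q + f3 * x.2.2
        + (x.1 * x.2.2 - x.2.1 ^ (q + 1)) ≠ 0}
      = ↑{x ∈ H | ¬(x.1 + f3) * x.2.2 + h x.1 x.2.1 = 0} := by
    ext x
    simp [H, F, hf, and_assoc]
  rw [hset, Set.ncard_coe_finset, ← hH, ← card_filter_add_card_filter_not (s := H)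
    fun x => (x.1 + f3) * x.2.2 + h x.1 x.2.1 = 0]
  omega

/-- For f = f₀ + f₁X₁ + f₂X₂ + f₂^qX₂^q + f₃X₃ + (X₁X₃ - X₂^{q+1}),
    the number of 2×2 Hermitian matrices with f ≠ 0 is at least q⁴ - q³ - q. -/
theorem stmt9 (q : ℕ) (hq : ∃ p n : ℕ, p.Prime ∧ 0 < n ∧ q = p ^ n)
    (K : Type*) [Field K] [Fintype K] (hK : Fintype.card K = q ^ 2)
    (f0 f1 f3 : K) (h0 : f0 ^ q = f0) (h1 : f1 ^ q = f1) (h3 : f3 ^ q = f3)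
    (f2 : K) :
    q ^ 4 - q ^ 3 - q ≤
      {x : K × K × K | x.1 ^ q = x.1 ∧ x.2.2 ^ q = x.2.2 ∧
        f0 + f1 * x.1 + f2 * x.2.1 + f2 ^ q * x.2.1 ^ q + f3 * x.2.2
          + (x.1 * x.2.2 - x.2.1 ^ (q + 1)) ≠ 0}.ncard :=
  stmt9_general q K hK f0 f1 f3 h3 f2
end

section
/- Let q be a prime power, ℓ = 2, and f(X₁,X₂,X₃) = f₀ + f₁X₁ + f₂X₂ + f₂^qX₂^q + f₃X₃ + (X₁X₃ − X₂^{q+1}) with f₀,f₁,f₃ ∈ F_q, f₂ ∈ F_{q^2}. If f₀ + f₂^{q+1} − f₁f₃ = 0, then the number of 2×2 Hermitian matrices (X₁,X₃ ∈ F_q, X₂ ∈ F_{q^2}) on which f is nonzero equals exactly q⁴ − q³ + q² − q. -/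
/-!
The translation `X₁ ↦ X₁ + f₃`, `X₂ ↦ X₂ - f₂^q`, `X₃ ↦ X₃ + f₁` preserves the conditions
`X₁, X₃ ∈ 𝔽_q` and, because `f₀ + f₂^{q+1} - f₁f₃ = 0`, turns `f` into `X₁X₃ - N(X₂)`, where
`N(X₂) = X₂^{q+1} ∈ 𝔽_q` is the norm. Its zeros are counted fibrewise over `X₂`: for `c ∈ 𝔽_q`
the equation `X₁X₃ = c` has `q - 1` solutions in `𝔽_q²`, plus `q` more when `c = 0`, and `N`
vanishes only at `0`. So `f` has `q²(q - 1) + q` zeros among the `q⁴` Hermitian matrices.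
-/

open Polynomial Finset

theorem X_pow_sub_X_dvd_X_pow_pow_sub_X {R : Type*} [CommRing R] (p : ℕ) [Fact p.Prime]
    [CharP R p] (n m : ℕ) : (X ^ p ^ n - X : R[X]) ∣ X ^ (p ^ n) ^ m - X := by
  induction m with
  | zero => simp
  | succ m ih =>
    have hstep : (X ^ (p ^ n) ^ (m + 1) - X : R[X])
        = (X ^ (p ^ n) ^ m - X) ^ p ^ n + (X ^ p ^ n - X) := by
      rw [pow_succ, pow_mul, sub_pow_char_pow]
      ring
    rw [hstep]
    exact dvd_add (dvd_pow ih (pow_ne_zero _ (Fact.out : p.Prime).ne_zero)) dvd_rfl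

theorem FiniteField.card_filter_pow_eq_self_s10 {K : Type*} [Field K] [Fintype K] [DecidableEq K]
    (p : ℕ) [Fact p.Prime] [CharP K p] {n m : ℕ} (hK : Fintype.card K = (p ^ n) ^ m) :
    #{x : K | x ^ p ^ n = x} = p ^ n := by
  have hn : n ≠ 0 := by
    rintro rfl
    simpa [hK] using (Fintype.one_lt_card : 1 < Fintype.card K)
  have hq : 1 < p ^ n := Nat.one_lt_pow hn (Fact.out : p.Prime).one_lt
  have hsep : (X ^ p ^ n - X : K[X]).Separable := galois_poly_separable p _ (dvd_pow_self p hn)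
  have hsplits : (X ^ p ^ n - X : K[X]).Splits := by
    refine Splits.of_dvd ?_ (FiniteField.X_pow_card_sub_X_ne_zero K Fintype.one_lt_card)
      (hK ▸ X_pow_sub_X_dvd_X_pow_pow_sub_X p n m)
    rw [splits_iff_card_roots, FiniteField.roots_X_pow_card_sub_X,
      FiniteField.X_pow_card_sub_X_natDegree_eq K Fintype.one_lt_card, ← Finset.card_def,
      Finset.card_univ]
  have hroots : ({x : K | x ^ p ^ n = x} : Finset K) = (X ^ p ^ n - X : K[X]).roots.toFinset := by
    ext x
    simp [FiniteField.X_pow_card_sub_X_ne_zero K hq, sub_eq_zero]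
  rw [hroots, Multiset.toFinset_card_of_nodup (nodup_roots hsep),
    ← hsplits.natDegree_eq_card_roots, FiniteField.X_pow_card_sub_X_natDegree_eq K hq]

section CountProducts

variable {K : Type*} [CommGroupWithZero K] [DecidableEq K] {S : Finset K}

theorem card_filter_mul_eq (h0 : 0 ∈ S) (hdiv : ∀ a ∈ S, ∀ b ∈ S, a / b ∈ S) {c : K}
    (hc : c ∈ S) : #{y ∈ S ×ˢ S | y.1 * y.2 = c} = #S - 1 + if c = 0 then #S else 0 := by
  have hfiber : ∀ a ∈ S.erase 0, #{b ∈ S | a * b = c} = 1 := by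
    intro a ha
    have ha0 : a ≠ 0 := ne_of_mem_erase ha
    refine card_eq_one.mpr ⟨c / a, ?_⟩
    ext b
    simp only [mem_filter, mem_singleton]
    constructor
    · rintro ⟨-, rfl⟩
      field_simp
    · rintro rfl
      exact ⟨hdiv c hc a (mem_of_mem_erase ha), by field_simp⟩
  rw [card_filter, sum_product, ← add_sum_erase S _ h0]
  simp only [← card_filter, sum_congr rfl hfiber, sum_const, card_erase_of_mem h0, smul_eq_mul,
    mul_one, zero_mul]
  rcases eq_or_ne c 0 with rfl | hc0
  · simp [add_comm]
  · simp [hc0, hc0.symm, add_comm]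

theorem card_filter_mul_eq_norm [Fintype K] (h0 : 0 ∈ S) (hdiv : ∀ a ∈ S, ∀ b ∈ S, a / b ∈ S)
    {N : K → K} (hN : ∀ b, N b ∈ S) (hN0 : ∀ b, N b = 0 ↔ b = 0) :
    #{x ∈ S ×ˢ univ ×ˢ S | x.1 * x.2.2 = N x.2.1} = Fintype.card K * (#S - 1) + #S := by
  have hslices : #{x ∈ S ×ˢ univ ×ˢ S | x.1 * x.2.2 = N x.2.1}
      = ∑ b, #{y ∈ S ×ˢ S | y.1 * y.2 = N b} := by
    simp only [card_filter, sum_product]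
    exact sum_comm
  rw [hslices, sum_congr rfl fun b _ => card_filter_mul_eq h0 hdiv (hN b)]
  simp [sum_add_distrib, hN0]

end CountProducts

theorem card_filter_mul_ne_pow_succ {K : Type*} [Field K] [Fintype K] [DecidableEq K] {q : ℕ}
    (hK : Fintype.card K = q ^ 2) {S : Finset K} (hS : ∀ x, x ∈ S ↔ x ^ q = x) (hSq : #S = q) :
    #{y ∈ S ×ˢ univ ×ˢ S | y.1 * y.2.2 ≠ y.2.1 ^ (q + 1)} = q ^ 4 - q ^ 3 + q ^ 2 - q := by
  have hq0 : q ≠ 0 := by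
    rintro rfl
    exact Fintype.card_ne_zero (hK.trans (zero_pow two_ne_zero))
  have h0 : 0 ∈ S := (hS 0).mpr (zero_pow hq0)
  have hdiv : ∀ a ∈ S, ∀ b ∈ S, a / b ∈ S := by
    simp only [hS]
    intro a ha b hb
    rw [div_pow, ha, hb]
  have hnorm : ∀ b : K, b ^ (q + 1) ∈ S := fun b => by
    rw [hS, ← pow_mul, mul_comm, pow_mul, pow_succ, ← pow_mul, ← sq, ← hK, FiniteField.pow_card,
      ← pow_succ']
  rw [filter_not, card_sdiff_of_subset (filter_subset _ _),
    card_filter_mul_eq_norm h0 hdiv hnorm (fun b => pow_eq_zero_iff (Nat.succ_ne_zero _)),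
    card_product, card_product, card_univ, hK, hSq]
  obtain ⟨r, rfl⟩ := Nat.exists_eq_add_one_of_ne_zero hq0
  rw [Nat.add_sub_cancel]
  ring_nf
  omega

theorem hermitian_form_eq {R : Type*} [CommRing R] (q : ℕ) {f0 f1 f2 f3 x1 x2 x3 : R}
    (hcond : f0 + f2 ^ (q + 1) - f1 * f3 = 0) (hconj : (x2 - f2 ^ q) ^ q = x2 ^ q - f2) :
    f0 + f1 * x1 + f2 * x2 + f2 ^ q * x2 ^ q + f3 * x3 + (x1 * x3 - x2 ^ (q + 1))
      = (x1 + f3) * (x3 + f1) - (x2 - f2 ^ q) ^ (q + 1) := by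
  rw [pow_succ (x2 - f2 ^ q), hconj]
  linear_combination hcond

theorem stmt10_general (q : ℕ) (hq : ∃ p n : ℕ, p.Prime ∧ 0 < n ∧ q = p ^ n)
    (K : Type*) [Field K] [Fintype K] (hK : Fintype.card K = q ^ 2)
    (f0 f1 f3 : K) (h1 : f1 ^ q = f1) (h3 : f3 ^ q = f3)
    (f2 : K) (hcond : f0 + f2 ^ (q + 1) - f1 * f3 = 0) :
    {x : K × K × K | x.1 ^ q = x.1 ∧ x.2.2 ^ q = x.2.2 ∧
        f0 + f1 * x.1 + f2 * x.2.1 + f2 ^ q * x.2.1 ^ q + f3 * x.2.2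
          + (x.1 * x.2.2 - x.2.1 ^ (q + 1)) ≠ 0}.ncard
      = q ^ 4 - q ^ 3 + q ^ 2 - q := by
  classical
  obtain ⟨p, n, hp, -, rfl⟩ := hq
  have : Fact p.Prime := ⟨hp⟩
  have : CharP K p := charP_of_card_eq_prime_pow (hK.trans (pow_mul p n 2).symm)
  set S : Finset K := {x | x ^ p ^ n = x}
  have hconj : ∀ x : K, (x - f2 ^ p ^ n) ^ p ^ n = x ^ p ^ n - f2 := fun x => by
    rw [sub_pow_char_pow, ← pow_mul, ← sq, ← hK, FiniteField.pow_card]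
  have hadd : ∀ a b : K, b ^ p ^ n = b → ((a + b) ^ p ^ n = a + b ↔ a ^ p ^ n = a) :=
    fun a b hb => by rw [add_pow_char_pow, hb, add_left_inj]
  have htranslate : {x : K × K × K | x.1 ^ p ^ n = x.1 ∧ x.2.2 ^ p ^ n = x.2.2 ∧
        f0 + f1 * x.1 + f2 * x.2.1 + f2 ^ p ^ n * x.2.1 ^ p ^ n + f3 * x.2.2
          + (x.1 * x.2.2 - x.2.1 ^ (p ^ n + 1)) ≠ 0}
      = (· + (f3, -f2 ^ p ^ n, f1)) ⁻¹'
          ↑({y ∈ S ×ˢ univ ×ˢ S | y.1 * y.2.2 ≠ y.2.1 ^ (p ^ n + 1)} : Finset (K × K × K)) := by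
    ext ⟨x1, x2, x3⟩
    rw [Set.mem_ofPred_eq, hermitian_form_eq (p ^ n) hcond (hconj x2)]
    simp [S, ← sub_eq_add_neg, hadd _ _ h3, hadd _ _ h1, sub_ne_zero, and_assoc]
  rw [htranslate, Set.ncard_preimage_of_injective_subset_range (add_left_injective _)
      fun y _ => ⟨y - _, sub_add_cancel y _⟩, Set.ncard_coe_finset,
    card_filter_mul_ne_pow_succ hK (fun x => mem_filter_univ x)
      (FiniteField.card_filter_pow_eq_self_s10 p hK)]

/-- If f₀ + f₂^{q+1} - f₁f₃ = 0, then f = f₀ + f₁X₁ + f₂X₂ + f₂^qX₂^q + f₃X₃ +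
    (X₁X₃ - X₂^{q+1}) is nonzero on exactly q⁴ - q³ + q² - q Hermitian matrices. -/
theorem stmt10 (q : ℕ) (hq : ∃ p n : ℕ, p.Prime ∧ 0 < n ∧ q = p ^ n)
    (K : Type*) [Field K] [Fintype K] (hK : Fintype.card K = q ^ 2)
    (f0 f1 f3 : K) (h0 : f0 ^ q = f0) (h1 : f1 ^ q = f1) (h3 : f3 ^ q = f3)
    (f2 : K) (hcond : f0 + f2 ^ (q + 1) - f1 * f3 = 0) :
    {x : K × K × K | x.1 ^ q = x.1 ∧ x.2.2 ^ q = x.2.2 ∧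
        f0 + f1 * x.1 + f2 * x.2.1 + f2 ^ q * x.2.1 ^ q + f3 * x.2.2
          + (x.1 * x.2.2 - x.2.1 ^ (q + 1)) ≠ 0}.ncard
      = q ^ 4 - q ^ 3 + q ^ 2 - q :=
  stmt10_general q hq K hK f0 f1 f3 h1 h3 f2 hcond
end

section
/- Let q be a prime power, ℓ = 2, and f(X₁,X₂,X₃) = f₀ + f₁X₁ + f₂X₂ + f₂^qX₂^q + f₃X₃ + (X₁X₃ − X₂^{q+1}) with f₀,f₁,f₃ ∈ F_q, f₂ ∈ F_{q^2}. If f₀ + f₂^{q+1} − f₁f₃ ≠ 0, then the number of 2×2 Hermitian matrices on which f is nonzero equals exactly q⁴ − q³ − q. -/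
/-!
Write `N u = u ^ (q + 1)` for the norm of `K = 𝔽_{q²}` onto its subfield `F = {x | x ^ q = x}`.
Translating `(X₁, X₂, X₃)` by `(-f₃, f₂^q, -f₁)` turns `f` into `X₁X₃ - (N X₂ - c)` with
`c = f₀ + f₂^{q+1} - f₁f₃ ∈ Fˣ`. For `s ∈ F` the equation `x₁x₃ = s` has `q - 1` solutions in
`F²` if `s ≠ 0` and `2q - 1` if `s = 0`, and `N X₂ = c` has `q + 1` solutions, since `N` maps
`Kˣ` onto `Fˣ` with fibres of size `q + 1`. So the zero set has `q²(q - 1) + q(q + 1) = q³ + q`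
points among the `q⁴` of `F × K × F`.
-/

open Finset Polynomial

theorem IsCyclic.exists_pow_eq_of_pow_eq_one {G : Type*} [CommGroup G] [IsCyclic G] [Finite G]
    {d e : ℕ} (hG : Nat.card G = d * e) {a : G} (ha : a ^ e = 1) : ∃ b, b ^ d = a := by
  have hd : d ≠ 0 := by rintro rfl; exact Nat.card_pos.ne' (by simpa using hG)
  have hle : (powMonoidHom d : G →* G).range ≤ (powMonoidHom e).ker := by
    rintro _ ⟨b, rfl⟩
    simp [← pow_mul, ← hG, pow_card_eq_one']
  have hge : Nat.card (powMonoidHom e : G →* G).ker ≤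
      Nat.card (powMonoidHom d : G →* G).range := by
    rw [IsCyclic.card_powMonoidHom_ker, IsCyclic.card_powMonoidHom_range, hG,
      Nat.gcd_mul_left_left, Nat.gcd_mul_right_left,
      Nat.mul_div_cancel_left _ (Nat.pos_of_ne_zero hd)]
  have ha' : a ∈ (powMonoidHom e : G →* G).ker := ha
  rwa [← Subgroup.eq_of_le_of_card_ge hle hge] at ha'

theorem pow_sub_one_eq_one_iff_pow_eq_self {M : Type*} [MonoidWithZero M]
    [IsRightCancelMulZero M] {a : M} (ha : a ≠ 0) {n : ℕ} (hn : n ≠ 0) :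
    a ^ (n - 1) = 1 ↔ a ^ n = a := by
  rw [← pow_sub_one_mul hn, mul_eq_right₀ ha]

theorem Finset.card_filter_univ_prod {α β : Type*} [Fintype α] [Fintype β] (p : α → β → Prop)
    [∀ a b, Decidable (p a b)] : #{x : α × β | p x.1 x.2} = ∑ a, #{b | p a b} := by
  simp only [card_filter, Fintype.sum_prod_type]

theorem Finset.card_filter_univ_prod_prod {α β γ : Type*} [Fintype α] [Fintype β] [Fintype γ]
    (p : α → β → γ → Prop) [∀ a b c, Decidable (p a b c)] :
    #{x : α × β × γ | p x.1 x.2.1 x.2.2} = ∑ b, #{y : α × γ | p y.1 b y.2} := by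
  simp only [card_filter, Fintype.sum_prod_type]
  exact Finset.sum_comm

namespace FiniteField

variable {K : Type*} [Field K] [Fintype K]

theorem exists_isPrimitiveRoot_of_dvd {d : ℕ} (hd : d ∣ Fintype.card K - 1) :
    ∃ ζ : K, IsPrimitiveRoot ζ d := by
  classical
  obtain ⟨e, hde⟩ := hd
  obtain ⟨g, hg⟩ := IsCyclic.exists_ofOrder_eq_natCard (α := Kˣ)
  rw [Nat.card_units, Nat.card_eq_fintype_card, hde] at hg
  have he : e ≠ 0 := by rintro rfl; have := Fintype.one_lt_card (α := K); omega
  refine ⟨(g ^ e : Kˣ), IsPrimitiveRoot.coe_units_iff.2 ?_⟩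
  have := IsPrimitiveRoot.orderOf (g ^ e)
  rwa [orderOf_pow_of_dvd he (hg ▸ dvd_mul_left e d), hg,
    Nat.mul_div_cancel _ (Nat.pos_of_ne_zero he)] at this

theorem card_filter_pow_eq [DecidableEq K] {d e : ℕ} (hde : d * e = Fintype.card K - 1)
    {a : K} (ha0 : a ≠ 0) (ha : a ^ e = 1) : #{x : K | x ^ d = a} = d := by
  have hd : 0 < d := Nat.pos_of_ne_zero <| by
    rintro rfl; have := Fintype.one_lt_card (α := K); omega
  obtain ⟨ζ, hζ⟩ := exists_isPrimitiveRoot_of_dvd ⟨e, hde.symm⟩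
  obtain ⟨b, hb⟩ := IsCyclic.exists_pow_eq_of_pow_eq_one (a := Units.mk0 a ha0)
    (by rw [Nat.card_units, Nat.card_eq_fintype_card, hde]) (Units.ext (by simp [ha]))
  have : ({x : K | x ^ d = a} : Finset K) = nthRootsFinset d a := by
    ext x; simp [mem_nthRootsFinset hd]
  rw [this, nthRootsFinset_def, Multiset.toFinset_card_of_nodup (hζ.nthRoots_nodup ha0),
    hζ.card_nthRoots, if_pos ⟨b, by simpa using congrArg Units.val hb⟩]

variable {q : ℕ}

theorem one_lt_of_card_eq_sq (hK : Fintype.card K = q ^ 2) : 1 < q := by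
  have := Fintype.one_lt_card (α := K)
  rw [hK] at this
  by_contra! h
  interval_cases q <;> simp at this

theorem exists_expChar_pow_eq_of_card_eq_sq (hK : Fintype.card K = q ^ 2) :
    ∃ p n, ExpChar K p ∧ q = p ^ n := by
  obtain ⟨p, hchar, n, hp, hcard⟩ := card' K
  obtain ⟨m, -, rfl⟩ := (Nat.dvd_prime_pow hp).1 (hcard ▸ hK ▸ Dvd.intro_left _ (sq q).symm)
  have := Fact.mk hp
  exact ⟨p, m, inferInstance, rfl⟩

theorem add_pow_of_card_eq_sq (hK : Fintype.card K = q ^ 2) (x y : K) :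
    (x + y) ^ q = x ^ q + y ^ q := by
  obtain ⟨p, n, _, rfl⟩ := exists_expChar_pow_eq_of_card_eq_sq hK
  exact add_pow_expChar_pow x y p n

theorem sub_pow_of_card_eq_sq (hK : Fintype.card K = q ^ 2) (x y : K) :
    (x - y) ^ q = x ^ q - y ^ q := by
  obtain ⟨p, n, _, rfl⟩ := exists_expChar_pow_eq_of_card_eq_sq hK
  exact sub_pow_expChar_pow x y n

theorem pow_pow_of_card_eq_sq (hK : Fintype.card K = q ^ 2) (x : K) : (x ^ q) ^ q = x := by
  rw [← pow_mul, ← sq, ← hK, pow_card]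

theorem pow_add_one_pow_of_card_eq_sq (hK : Fintype.card K = q ^ 2) (x : K) :
    (x ^ (q + 1)) ^ q = x ^ (q + 1) := by
  rw [pow_succ, mul_pow, pow_pow_of_card_eq_sq hK, mul_comm]

theorem add_pow_eq_self_iff_of_card_eq_sq (hK : Fintype.card K = q ^ 2) {x y : K}
    (hy : y ^ q = y) : (x + y) ^ q = x + y ↔ x ^ q = x := by
  rw [add_pow_of_card_eq_sq hK, hy, add_left_inj]

/-- Completing the Hermitian square. -/
theorem hermitian_eq_mul_sub_pow_add_one_sub (hK : Fintype.card K = q ^ 2)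
    (f0 f1 f2 f3 x1 x2 x3 : K) :
    f0 + f1 * x1 + f2 * x2 + f2 ^ q * x2 ^ q + f3 * x3 + (x1 * x3 - x2 ^ (q + 1))
      = (x1 + f3) * (x3 + f1) - ((x2 - f2 ^ q) ^ (q + 1) - (f0 + f2 ^ (q + 1) - f1 * f3)) := by
  rw [pow_succ (x2 - f2 ^ q), sub_pow_of_card_eq_sq hK, pow_pow_of_card_eq_sq hK]
  ring

variable [DecidableEq K]

theorem card_filter_pow_eq_self_s11 (hK : Fintype.card K = q ^ 2) : #{x : K | x ^ q = x} = q := by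
  have hq := one_lt_of_card_eq_sq hK
  have hsplit : ({x : K | x ^ q = x} : Finset K) =
      insert 0 ({x : K | x ^ (q - 1) = 1} : Finset K) := by
    ext x
    rcases eq_or_ne x 0 with rfl | hx
    · simp [zero_pow (by omega : q ≠ 0)]
    · simp [hx, pow_sub_one_eq_one_iff_pow_eq_self hx (by omega : q ≠ 0)]
  rw [hsplit, card_insert_of_notMem (by simp [zero_pow (by omega : q - 1 ≠ 0)]),
    card_filter_pow_eq (e := q + 1) (by rw [hK, mul_comm, ← Nat.sq_sub_sq, one_pow])
      one_ne_zero (one_pow _)]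
  omega

theorem card_filter_pow_add_one_eq (hK : Fintype.card K = q ^ 2) {c : K} (hc0 : c ≠ 0)
    (hc : c ^ q = c) : #{x : K | x ^ (q + 1) = c} = q + 1 := by
  have hq := one_lt_of_card_eq_sq hK
  exact card_filter_pow_eq (e := q - 1) (by rw [hK, ← Nat.sq_sub_sq, one_pow]) hc0
    ((pow_sub_one_eq_one_iff_pow_eq_self hc0 (by omega)).2 hc)

theorem card_filter_pow_eq_self_and_pow_eq_self (hK : Fintype.card K = q ^ 2) :
    #{x : K × K × K | x.1 ^ q = x.1 ∧ x.2.2 ^ q = x.2.2} = q ^ 4 := by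
  have : ({x : K × K × K | x.1 ^ q = x.1 ∧ x.2.2 ^ q = x.2.2} : Finset _) =
      ({x : K | x ^ q = x} : Finset K) ×ˢ univ ×ˢ ({x : K | x ^ q = x} : Finset K) := by
    ext x; simp
  rw [this, card_product, card_product, card_univ, hK, card_filter_pow_eq_self_s11 hK]
  ring

theorem card_filter_pow_eq_self_and_mul_eq (hK : Fintype.card K = q ^ 2) {s : K}
    (hs : s ^ q = s) :
    #{y : K × K | y.1 ^ q = y.1 ∧ y.2 ^ q = y.2 ∧ y.1 * y.2 = s}
      = q - 1 + if s = 0 then q else 0 := by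
  have hq := one_lt_of_card_eq_sq hK
  have hfiber_ne_zero : ∀ a ≠ (0 : K), #{b : K | a ^ q = a ∧ b ^ q = b ∧ a * b = s} =
      if a ^ q = a then 1 else 0 := by
    intro a ha
    split_ifs with haq
    · rw [card_eq_one]
      refine ⟨s / a, ?_⟩
      ext b
      simp only [mem_filter, mem_univ, true_and, mem_singleton, haq]
      constructor
      · rintro ⟨-, -, rfl⟩
        field_simp
      · rintro rfl
        exact ⟨by rw [div_pow, hs, haq], by field_simp⟩
    · simp [haq]
  have hfiber_zero : #{b : K | (0 : K) ^ q = 0 ∧ b ^ q = b ∧ 0 * b = s} = if s = 0 then q else 0 := by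
    split_ifs with h0
    · simpa [h0, zero_pow (by omega : q ≠ 0)] using card_filter_pow_eq_self_s11 hK
    · simp [Ne.symm h0]
  rw [card_filter_univ_prod (fun a b => a ^ q = a ∧ b ^ q = b ∧ a * b = s),
    ← add_sum_erase _ _ (mem_univ 0), sum_congr rfl fun a ha => hfiber_ne_zero a (ne_of_mem_erase ha),
    sum_boole, filter_erase, card_erase_of_mem (by simp [zero_pow (by omega : q ≠ 0)]),
    card_filter_pow_eq_self_s11 hK, hfiber_zero, Nat.cast_id, add_comm]

theorem card_filter_mul_eq_pow_add_one_sub (hK : Fintype.card K = q ^ 2) {c : K} (hc0 : c ≠ 0)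
    (hc : c ^ q = c) :
    #{y : K × K × K | y.1 ^ q = y.1 ∧ y.2.2 ^ q = y.2.2 ∧ y.1 * y.2.2 = y.2.1 ^ (q + 1) - c}
      = q ^ 3 + q := by
  have hq := one_lt_of_card_eq_sq hK
  have hnorm : ∀ b : K, (b ^ (q + 1) - c) ^ q = b ^ (q + 1) - c := fun b => by
    rw [sub_pow_of_card_eq_sq hK, pow_add_one_pow_of_card_eq_sq hK, hc]
  rw [card_filter_univ_prod_prod
      (fun a b d => a ^ q = a ∧ d ^ q = d ∧ a * d = b ^ (q + 1) - c),
    sum_congr rfl fun b _ => card_filter_pow_eq_self_and_mul_eq hK (hnorm b)]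
  simp_rw [sub_eq_zero]
  rw [sum_add_distrib, ← sum_filter, sum_const, sum_const, card_univ, hK,
    card_filter_pow_add_one_eq hK hc0 hc, smul_eq_mul, smul_eq_mul]
  obtain ⟨r, rfl⟩ : ∃ r, q = r + 1 := ⟨q - 1, by omega⟩
  simp only [add_tsub_cancel_right]
  ring

theorem card_filter_hermitian_eq_zero (hK : Fintype.card K = q ^ 2) {f0 f1 f2 f3 : K}
    (h0 : f0 ^ q = f0) (h1 : f1 ^ q = f1) (h3 : f3 ^ q = f3)
    (hc0 : f0 + f2 ^ (q + 1) - f1 * f3 ≠ 0) :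
    #{x : K × K × K | x.1 ^ q = x.1 ∧ x.2.2 ^ q = x.2.2 ∧
      f0 + f1 * x.1 + f2 * x.2.1 + f2 ^ q * x.2.1 ^ q + f3 * x.2.2
        + (x.1 * x.2.2 - x.2.1 ^ (q + 1)) = 0} = q ^ 3 + q := by
  have hc : (f0 + f2 ^ (q + 1) - f1 * f3) ^ q = f0 + f2 ^ (q + 1) - f1 * f3 := by
    rw [sub_pow_of_card_eq_sq hK, add_pow_of_card_eq_sq hK, mul_pow, h0, h1, h3,
      pow_add_one_pow_of_card_eq_sq hK]
  rw [← card_filter_mul_eq_pow_add_one_sub hK hc0 hc]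
  refine card_equiv ((Equiv.addRight f3).prodCongr ((Equiv.subRight (f2 ^ q)).prodCongr
    (Equiv.addRight f1))) fun x => ?_
  simp only [mem_filter, mem_univ, true_and, Equiv.prodCongr_apply, Prod.map,
    Equiv.coe_addRight, Equiv.subRight_apply, add_pow_eq_self_iff_of_card_eq_sq hK h3,
    add_pow_eq_self_iff_of_card_eq_sq hK h1, hermitian_eq_mul_sub_pow_add_one_sub hK, sub_eq_zero]

end FiniteField

open FiniteField in
theorem stmt11_general (q : ℕ)
    (K : Type*) [Field K] [Fintype K] (hK : Fintype.card K = q ^ 2)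
    (f0 f1 f3 : K) (h0 : f0 ^ q = f0) (h1 : f1 ^ q = f1) (h3 : f3 ^ q = f3)
    (f2 : K) (hcond : f0 + f2 ^ (q + 1) - f1 * f3 ≠ 0) :
    {x : K × K × K | x.1 ^ q = x.1 ∧ x.2.2 ^ q = x.2.2 ∧
        f0 + f1 * x.1 + f2 * x.2.1 + f2 ^ q * x.2.1 ^ q + f3 * x.2.2
          + (x.1 * x.2.2 - x.2.1 ^ (q + 1)) ≠ 0}.ncard
      = q ^ 4 - q ^ 3 - q := by
  classical
  have hsplit := card_filter_add_card_filter_not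
    (s := ({x : K × K × K | x.1 ^ q = x.1 ∧ x.2.2 ^ q = x.2.2} : Finset _))
    (fun x => f0 + f1 * x.1 + f2 * x.2.1 + f2 ^ q * x.2.1 ^ q + f3 * x.2.2
        + (x.1 * x.2.2 - x.2.1 ^ (q + 1)) = 0)
  simp only [filter_filter, and_assoc, ← ne_eq] at hsplit
  rw [card_filter_hermitian_eq_zero hK h0 h1 h3 hcond,
    card_filter_pow_eq_self_and_pow_eq_self hK] at hsplit
  rw [Set.ncard_eq_toFinset_card', Set.toFinset_ofPred]
  omega

/-- If f₀ + f₂^{q+1} - f₁f₃ ≠ 0, then f = f₀ + f₁X₁ + f₂X₂ + f₂^qX₂^q + f₃X₃ +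
    (X₁X₃ - X₂^{q+1}) is nonzero on exactly q⁴ - q³ - q Hermitian matrices. -/
theorem stmt11 (q : ℕ) (hq : ∃ p n : ℕ, p.Prime ∧ 0 < n ∧ q = p ^ n)
    (K : Type*) [Field K] [Fintype K] (hK : Fintype.card K = q ^ 2)
    (f0 f1 f3 : K) (h0 : f0 ^ q = f0) (h1 : f1 ^ q = f1) (h3 : f3 ^ q = f3)
    (f2 : K) (hcond : f0 + f2 ^ (q + 1) - f1 * f3 ≠ 0) :
    {x : K × K × K | x.1 ^ q = x.1 ∧ x.2.2 ^ q = x.2.2 ∧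
        f0 + f1 * x.1 + f2 * x.2.1 + f2 ^ q * x.2.1 ^ q + f3 * x.2.2
          + (x.1 * x.2.2 - x.2.1 ^ (q + 1)) ≠ 0}.ncard
      = q ^ 4 - q ^ 3 - q :=
  stmt11_general q K hK f0 f1 f3 h0 h1 h3 f2 hcond
end

section
/- Let q be a prime power and ℓ ≥ 2. Then q^{ℓ²} − q^{ℓ²−1} − q^{ℓ²−3} ≥ ∏_{i=0}^{ℓ−1} (q^ℓ − q^i), i.e., the minimum distance of the affine Hermitian Grassmann code is at least that of the affine Grassmann code. -/
/-!
Bound every factor `q^ℓ - q^i` with `i < ℓ - 2` by `q^ℓ`, and multiply out the two remaining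
factors: `(q^ℓ - q^(ℓ-2)) (q^ℓ - q^(ℓ-1)) = q^(2ℓ-3) (q^3 - q^2 - q + 1)`. This bounds the product
by `q^(ℓ²-3) (q^3 - q^2 - q + 1)`, which falls short of `q^(ℓ²-3) (q^3 - q^2 - 1)` by
`q^(ℓ²-3) (q - 2) ≥ 0`.
-/

section

variable {R : Type*} [CommRing R] [LinearOrder R] [IsStrictOrderedRing R]

theorem prod_range_pow_sub_pow_le {Q : R} (hQ : 1 ≤ Q) {m n : ℕ} (hmn : m ≤ n) :
    ∏ i ∈ Finset.range m, (Q ^ n - Q ^ i) ≤ Q ^ (n * m) := by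
  have hQ0 : 0 ≤ Q := zero_le_one.trans hQ
  calc ∏ i ∈ Finset.range m, (Q ^ n - Q ^ i)
      ≤ ∏ _i ∈ Finset.range m, Q ^ n := by
        refine Finset.prod_le_prod (fun i hi => ?_) (fun i _ => ?_)
        · exact sub_nonneg.mpr (pow_le_pow_right₀ hQ (by simp at hi; omega))
        · exact sub_le_self _ (pow_nonneg hQ0 i)
    _ = Q ^ (n * m) := by rw [Finset.prod_const, Finset.card_range, pow_mul]

theorem prod_range_pow_sub_pow_le_pow_mul {Q : R} (hQ : 1 ≤ Q) (m : ℕ) :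
    ∏ i ∈ Finset.range (m + 2), (Q ^ (m + 2) - Q ^ i)
      ≤ Q ^ (m ^ 2 + 4 * m + 1) * (Q ^ 3 - Q ^ 2 - Q + 1) := by
  have hlast : 0 ≤ Q ^ (m + 2) - Q ^ (m + 1) := sub_nonneg.mpr (pow_le_pow_right₀ hQ (by omega))
  have hsecond : 0 ≤ Q ^ (m + 2) - Q ^ m := sub_nonneg.mpr (pow_le_pow_right₀ hQ (by omega))
  calc ∏ i ∈ Finset.range (m + 2), (Q ^ (m + 2) - Q ^ i)
      = (∏ i ∈ Finset.range m, (Q ^ (m + 2) - Q ^ i))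
          * (Q ^ (m + 2) - Q ^ m) * (Q ^ (m + 2) - Q ^ (m + 1)) := by
        rw [Finset.prod_range_succ, Finset.prod_range_succ]
    _ ≤ Q ^ ((m + 2) * m) * (Q ^ (m + 2) - Q ^ m) * (Q ^ (m + 2) - Q ^ (m + 1)) := by
        gcongr
        exact prod_range_pow_sub_pow_le hQ (by omega)
    _ = Q ^ (m ^ 2 + 4 * m + 1) * (Q ^ 3 - Q ^ 2 - Q + 1) := by ring

theorem prod_range_pow_sub_pow_le_pow_sq_sub {Q : R} (hQ : 2 ≤ Q) {ℓ : ℕ} (hℓ : 2 ≤ ℓ) :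
    ∏ i ∈ Finset.range ℓ, (Q ^ ℓ - Q ^ i) ≤ Q ^ (ℓ ^ 2) - Q ^ (ℓ ^ 2 - 1) - Q ^ (ℓ ^ 2 - 3) := by
  obtain ⟨m, rfl⟩ : ∃ m, ℓ = m + 2 := ⟨ℓ - 2, by omega⟩
  set k := m ^ 2 + 4 * m + 1
  have hsq : (m + 2) ^ 2 = k + 3 := by ring
  have hgap : 0 ≤ Q ^ k * (Q - 2) := mul_nonneg (pow_nonneg (by linarith) k) (sub_nonneg.mpr hQ)
  calc ∏ i ∈ Finset.range (m + 2), (Q ^ (m + 2) - Q ^ i)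
      ≤ Q ^ k * (Q ^ 3 - Q ^ 2 - Q + 1) := prod_range_pow_sub_pow_le_pow_mul (by linarith) m
    _ ≤ Q ^ (k + 3) - Q ^ (k + 2) - Q ^ k := by linear_combination hgap
    _ = Q ^ ((m + 2) ^ 2) - Q ^ ((m + 2) ^ 2 - 1) - Q ^ ((m + 2) ^ 2 - 3) := by
        rw [hsq]; rfl

end

/-- d(C^H(ℓ)) = q^{ℓ²} - q^{ℓ²-1} - q^{ℓ²-3} is at least
    d(C^A(ℓ)) = ∏_{i=0}^{ℓ-1}(q^ℓ - q^i). -/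
theorem stmt13 (q ℓ : ℕ) (hq : ∃ p n : ℕ, p.Prime ∧ 0 < n ∧ q = p ^ n) (hℓ : 2 ≤ ℓ) :
    ∏ i ∈ Finset.range ℓ, ((q : ℤ) ^ ℓ - (q : ℤ) ^ i)
      ≤ (q : ℤ) ^ (ℓ ^ 2) - (q : ℤ) ^ (ℓ ^ 2 - 1) - (q : ℤ) ^ (ℓ ^ 2 - 3) := by
  obtain ⟨p, n, hp, hn, rfl⟩ := hq
  have hq2 : 2 ≤ p ^ n := ((isPrimePow_nat_iff _).mpr ⟨p, n, hp, hn, rfl⟩).two_le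
  exact prod_range_pow_sub_pow_le_pow_sq_sub (by exact_mod_cast hq2) hℓ
end

section
/- Let q be a prime power, ℓ ≥ 1, and let C be the F_{q^2}-linear code obtained by evaluating all F_{q^2}-linear combinations of minors det_{I,J}(X) (I,J ⊆ [ℓ], |I| = |J|) of the generic ℓ×ℓ Hermitian matrix X at all ℓ×ℓ Hermitian matrices over F_{q^2}. Then the evaluation map is injective, so dim C = C(2ℓ, ℓ). -/
/-- The index set of minors: pairs of row/column subsets of equal size. -/
def MinorIndex (ℓ : ℕ) :=
  {p : Finset (Fin ℓ) × Finset (Fin ℓ) // p.1.card = p.2.card}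

noncomputable instance (ℓ : ℕ) : Fintype (MinorIndex ℓ) := by
  unfold MinorIndex; exact Fintype.ofFinite _

/-- The minor det_{I,J}(H) of a matrix H, on rows I and columns J. -/
noncomputable def minorAt {K : Type*} [Field K] {ℓ : ℕ}
    (H : Matrix (Fin ℓ) (Fin ℓ) K) (p : MinorIndex ℓ) : K :=
  (Matrix.of fun a b : Fin p.1.1.card =>
    H (p.1.1.orderEmbOfFin rfl a) (p.1.2.orderEmbOfFin p.2.symm b)).det

/-- Evaluation of an F_{q²}-linear combination of minors of the generic Hermitian
    matrix at all ℓ×ℓ Hermitian matrices. -/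
noncomputable def hermEval (q ℓ : ℕ) (K : Type*) [Field K]
    (f : MinorIndex ℓ → K)
    (H : {H : Matrix (Fin ℓ) (Fin ℓ) K // ∀ i j, H j i = (H i j) ^ q}) : K :=
  ∑ p : MinorIndex ℓ, f p * minorAt H.1 p

/-!
Write a combination `∑ f p • det_p` of minors of the generic Hermitian matrix as a polynomial in
the variables `X_{ij}`, `i ≤ j`, with `X_{ji} = X_{ij}^q`. The term of a minor indexed by a
permutation is a monomial whose exponent at `X_{ij}` is `[(i,j) used] + q·[(j,i) used]`; since
`q ≥ 2` these base-`q` digits recover the positions used, hence the minor and the permutation. So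
the polynomial has coefficient `f p` at the diagonal monomial of the minor `p`, and is nonzero when
`f` is. Its degree is at most `1` in diagonal variables and `q + 1 < q²` in the others, so by the
grid lemma of the Combinatorial Nullstellensatz it is nonzero at a point with diagonal coordinates
in `{0, 1}`, i.e. at a Hermitian matrix. The dimension is then the number of pairs `(I, J)` with
`|I| = |J|`, namely `∑ C(ℓ,k)² = C(2ℓ,ℓ)`.
-/

open MvPolynomial Finset

lemma card_minorIndex (ℓ : ℕ) : Fintype.card (MinorIndex ℓ) = (2 * ℓ).choose ℓ := by
  rw [Fintype.card_eq_nat_card]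
  change Nat.card {p : Finset (Fin ℓ) × Finset (Fin ℓ) // p.1.card = p.2.card} = _
  rw [Nat.card_eq_fintype_card, Fintype.card_subtype, ← Nat.sum_range_choose_sq,
    card_eq_sum_card_fiberwise (f := fun p => p.1.card) (t := range (ℓ + 1))]
  · refine sum_congr rfl fun k _ => ?_
    have hfib : ({p ∈ ({p | p.1.card = p.2.card} : Finset (Finset (Fin ℓ) × Finset (Fin ℓ))) |
        p.1.card = k}) = powersetCard k univ ×ˢ powersetCard k univ := by
      ext p
      simp only [mem_filter, mem_univ, true_and, mem_product, mem_powersetCard, subset_univ]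
      omega
    rw [hfib, card_product, card_powersetCard, card_univ, Fintype.card_fin, sq]
  · intro p _
    simpa [Nat.lt_succ_iff] using card_le_univ p.1

namespace MinorIndex

variable {ℓ : ℕ}

noncomputable def rows (p : MinorIndex ℓ) : Fin p.1.1.card ↪o Fin ℓ := p.1.1.orderEmbOfFin rfl

noncomputable def cols (p : MinorIndex ℓ) : Fin p.1.1.card ↪o Fin ℓ := p.1.2.orderEmbOfFin p.2.symm

noncomputable def positions (p : MinorIndex ℓ) (σ : Equiv.Perm (Fin p.1.1.card)) :
    Finset (Fin ℓ × Fin ℓ) :=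
  univ.image fun a => (p.rows (σ a), p.cols a)

lemma image_fst_positions (p : MinorIndex ℓ) (σ : Equiv.Perm (Fin p.1.1.card)) :
    (p.positions σ).image Prod.fst = p.1.1 := by
  calc _ = (univ.image σ).image p.rows := by rw [positions, image_image, image_image]; rfl
    _ = p.1.1 := by rw [image_univ_equiv]; exact image_orderEmbOfFin_univ _ _

lemma image_snd_positions (p : MinorIndex ℓ) (σ : Equiv.Perm (Fin p.1.1.card)) :
    (p.positions σ).image Prod.snd = p.1.2 := by
  rw [positions, image_image]
  exact image_orderEmbOfFin_univ _ _

lemma eq_of_positions_eq {p p' : MinorIndex ℓ} {σ : Equiv.Perm (Fin p.1.1.card)}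
    {σ' : Equiv.Perm (Fin p'.1.1.card)} (h : p.positions σ = p'.positions σ') : p = p' :=
  Subtype.ext <| Prod.ext
    (by rw [← image_fst_positions p σ, h, image_fst_positions])
    (by rw [← image_snd_positions p σ, h, image_snd_positions])

lemma perm_eq_of_positions_eq {p : MinorIndex ℓ} {σ σ' : Equiv.Perm (Fin p.1.1.card)}
    (h : p.positions σ = p.positions σ') : σ = σ' := by
  ext a
  have : (p.rows (σ a), p.cols a) ∈ p.positions σ' := h ▸ mem_image_of_mem _ (mem_univ a)
  obtain ⟨b, -, hb⟩ := mem_image.1 this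
  obtain ⟨hrow, hcol⟩ := Prod.mk.inj hb
  obtain rfl := p.cols.injective hcol
  exact congrArg Fin.val (p.rows.injective hrow).symm

end MinorIndex

lemma Nat.ite_add_ite_eq_iff {P Q P' Q' : Prop} [Decidable P] [Decidable Q] [Decidable P']
    [Decidable Q'] {q : ℕ} (hq : 2 ≤ q)
    (h : (if P then 1 else 0) + (if Q then q else 0) =
      (if P' then 1 else 0) + (if Q' then q else 0)) : (P ↔ P') ∧ (Q ↔ Q') := by
  split_ifs at h <;> simp_all <;> omega

section HermitianMonomial

variable {ℓ : ℕ} (q : ℕ)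

/-- The generic Hermitian matrix has entry `X s(i, j)` on and above the diagonal and
`X s(i, j) ^ q` below it; `hermExp q (i, j)` is that exponent. -/
def hermExp (x : Fin ℓ × Fin ℓ) : ℕ := if x.1 ≤ x.2 then 1 else q

noncomputable def hermMonomial (S : Finset (Fin ℓ × Fin ℓ)) : Sym2 (Fin ℓ) →₀ ℕ :=
  ∑ x ∈ S, Finsupp.single s(x.1, x.2) (hermExp q x)

lemma hermMonomial_mk_apply (S : Finset (Fin ℓ × Fin ℓ)) {x y : Fin ℓ} (hxy : x ≤ y) :
    hermMonomial q S s(x, y) =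
      (if (x, y) ∈ S then 1 else 0) + (if x ≠ y ∧ (y, x) ∈ S then q else 0) := by
  have hterm : ∀ z : Fin ℓ × Fin ℓ, Finsupp.single s(z.1, z.2) (hermExp q z) s(x, y) =
      (if (x, y) = z then 1 else 0) + (if x ≠ y ∧ (y, x) = z then q else 0) := by
    rintro ⟨i, j⟩
    simp only [Finsupp.single_apply, Sym2.eq_iff, hermExp, Prod.mk.injEq]
    split_ifs <;> first | rfl | omega
  rw [hermMonomial, Finsupp.finsetSum_apply, sum_congr rfl fun z _ => hterm z, sum_add_distrib,
    sum_ite_eq]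
  by_cases hne : x = y <;> simp [hne]

lemma hermMonomial_apply_le (S : Finset (Fin ℓ × Fin ℓ)) (v : Sym2 (Fin ℓ)) :
    hermMonomial q S v ≤ if v.IsDiag then 1 else q + 1 := by
  induction v using Sym2.inductionOn with
  | hf x y =>
  wlog hxy : x ≤ y generalizing x y
  · rw [Sym2.eq_swap]; exact this y x (le_of_not_ge hxy)
  simp only [hermMonomial_mk_apply q S hxy, Sym2.mk_isDiag_iff]
  split_ifs <;> omega

variable {q} in
lemma hermMonomial_injective (hq : 2 ≤ q) :
    Function.Injective (hermMonomial q : Finset (Fin ℓ × Fin ℓ) → Sym2 (Fin ℓ) →₀ ℕ) := by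
  intro S T h
  ext ⟨i, j⟩
  by_cases hij : i ≤ j
  · have := congrArg (· s(i, j)) h
    simp only [hermMonomial_mk_apply q _ hij] at this
    exact (Nat.ite_add_ite_eq_iff hq this).1
  · have := congrArg (· s(j, i)) h
    simp only [hermMonomial_mk_apply q _ (le_of_not_ge hij)] at this
    simpa [Ne.symm (ne_of_not_le hij)] using (Nat.ite_add_ite_eq_iff hq this).2

end HermitianMonomial

section GenericMinor

variable {ℓ : ℕ} (q : ℕ) (K : Type*) [Field K]

noncomputable def genericHermitian : Matrix (Fin ℓ) (Fin ℓ) (MvPolynomial (Sym2 (Fin ℓ)) K) :=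
  Matrix.of fun i j => X s(i, j) ^ hermExp q (i, j)

noncomputable def genericMinor (p : MinorIndex ℓ) : MvPolynomial (Sym2 (Fin ℓ)) K :=
  ((genericHermitian q K).submatrix p.rows p.cols).det

lemma genericMinor_eq_sum (p : MinorIndex ℓ) :
    genericMinor q K p = ∑ σ : Equiv.Perm (Fin p.1.1.card),
      C ((Equiv.Perm.sign σ : ℤ) : K) * monomial (hermMonomial q (p.positions σ)) 1 := by
  rw [genericMinor, Matrix.det_apply']
  refine sum_congr rfl fun σ _ => ?_
  rw [← map_intCast (C : K →+* MvPolynomial (Sym2 (Fin ℓ)) K), MinorIndex.positions, hermMonomial,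
    sum_image, monomial_sum_one]
  · simp [genericHermitian, X_pow_eq_monomial]
  · intro a _ b _ hab
    exact p.cols.injective (Prod.mk.inj hab).2

variable {q}

open scoped Classical in
lemma coeff_genericMinor (hq : 2 ≤ q) (p p' : MinorIndex ℓ) :
    coeff (hermMonomial q (p.positions 1)) (genericMinor q K p') = if p' = p then 1 else 0 := by
  simp only [genericMinor_eq_sum, coeff_sum, coeff_C_mul, coeff_monomial]
  split_ifs with hp
  · subst hp
    rw [sum_eq_single 1]
    · simp
    · intro σ _ hσ
      rw [if_neg fun h => hσ (MinorIndex.perm_eq_of_positions_eq (hermMonomial_injective hq h)),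
        mul_zero]
    · simp
  · refine sum_eq_zero fun σ _ => ?_
    rw [if_neg fun h => hp (MinorIndex.eq_of_positions_eq (hermMonomial_injective hq h)), mul_zero]

lemma eval_genericMinor (φ : Sym2 (Fin ℓ) → K) (p : MinorIndex ℓ) :
    eval φ (genericMinor q K p) = minorAt ((genericHermitian q K).map (eval φ)) p := by
  rw [genericMinor, RingHom.map_det]
  rfl

end GenericMinor

lemma MvPolynomial.degreeOf_sum_C_mul_le {σ R ι : Type*} [CommSemiring R] (i : σ)
    (s : Finset ι) (c : ι → R) (f : ι → MvPolynomial σ R) {b : ℕ}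
    (h : ∀ j ∈ s, degreeOf i (f j) ≤ b) : degreeOf i (∑ j ∈ s, C (c j) * f j) ≤ b :=
  (degreeOf_sum_le _ _ _).trans <|
    Finset.sup_le fun j hj => (degreeOf_C_mul_le _ _ _).trans (h j hj)

section MinorCombination

variable {ℓ : ℕ} (q : ℕ) (K : Type*) [Field K]

noncomputable def minorCombination (f : MinorIndex ℓ → K) : MvPolynomial (Sym2 (Fin ℓ)) K :=
  ∑ p, C (f p) * genericMinor q K p

lemma degreeOf_minorCombination_le (f : MinorIndex ℓ → K) (v : Sym2 (Fin ℓ)) :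
    degreeOf v (minorCombination q K f) ≤ if v.IsDiag then 1 else q + 1 := by
  refine degreeOf_sum_C_mul_le _ _ _ _ fun p _ => ?_
  rw [genericMinor_eq_sum]
  refine degreeOf_sum_C_mul_le _ _ _ _ fun σ _ => ?_
  rw [degreeOf_monomial_eq _ _ one_ne_zero]
  exact hermMonomial_apply_le q _ v

variable {q K}

lemma coeff_minorCombination (hq : 2 ≤ q) (f : MinorIndex ℓ → K) (p : MinorIndex ℓ) :
    coeff (hermMonomial q (p.positions 1)) (minorCombination q K f) = f p := by
  classical
  simp [minorCombination, coeff_sum, coeff_C_mul, coeff_genericMinor K hq]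

lemma minorCombination_ne_zero (hq : 2 ≤ q) {f : MinorIndex ℓ → K} (hf : f ≠ 0) :
    minorCombination q K f ≠ 0 := by
  obtain ⟨p, hp⟩ := Function.ne_iff.1 hf
  intro h
  exact hp (by rw [← coeff_minorCombination hq f p, h, coeff_zero, Pi.zero_apply])

end MinorCombination

lemma two_le_of_card_eq_sq {K : Type*} [Field K] [Fintype K] {q : ℕ}
    (hK : Fintype.card K = q ^ 2) : 2 ≤ q :=
  lt_of_pow_lt_pow_left₀ 2 q.zero_le (by simpa [hK] using Fintype.one_lt_card (α := K))

section Evaluation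

variable {ℓ q : ℕ} {K : Type*} [Field K]

lemma eval_minorCombination (f : MinorIndex ℓ → K) (φ : Sym2 (Fin ℓ) → K) :
    eval φ (minorCombination q K f) =
      ∑ p, f p * minorAt ((genericHermitian q K).map (eval φ)) p := by
  simp [minorCombination, eval_genericMinor]

lemma map_eval_genericHermitian_apply_swap [Fintype K] (hK : Fintype.card K = q ^ 2)
    {φ : Sym2 (Fin ℓ) → K} (hφ : ∀ i, φ s(i, i) ^ q = φ s(i, i)) (i j : Fin ℓ) :
    (genericHermitian q K).map (eval φ) j i = ((genericHermitian q K).map (eval φ) i j) ^ q := by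
  simp only [Matrix.map_apply, genericHermitian, Matrix.of_apply, map_pow, eval_X, hermExp,
    Sym2.eq_swap (a := j)]
  rcases lt_trichotomy i j with h | rfl | h
  · simp [h.not_ge, h.le]
  · simp [hφ]
  · simp [h.not_ge, h.le, ← pow_mul, ← sq, ← hK, FiniteField.pow_card]

lemma exists_hermEval_ne_zero [Fintype K] (hK : Fintype.card K = q ^ 2) {f : MinorIndex ℓ → K}
    (hf : f ≠ 0) : ∃ H, hermEval q ℓ K f H ≠ 0 := by
  classical
  have hq := two_le_of_card_eq_sq hK
  -- diagonal entries of a Hermitian matrix lie in `𝔽_q`; the grid `{0, 1}` suffices there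
  let S : Sym2 (Fin ℓ) → Finset K := fun v => if v.IsDiag then {0, 1} else univ
  have hdeg : ∀ v, degreeOf v (minorCombination q K f) < #(S v) := by
    intro v
    have := degreeOf_minorCombination_le q K f v
    simp only [S]
    split_ifs at this ⊢
    · rw [card_pair zero_ne_one]; omega
    · rw [card_univ, hK]; nlinarith
  obtain ⟨φ, hφS, hφ⟩ : ∃ φ, (∀ v, φ v ∈ S v) ∧ eval φ (minorCombination q K f) ≠ 0 := by
    by_contra! h
    exact minorCombination_ne_zero hq hf (eq_zero_of_eval_zero_at_prod_finset _ S hdeg h)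
  have hdiag : ∀ i, φ s(i, i) ^ q = φ s(i, i) := by
    intro i
    have := hφS s(i, i)
    simp only [S, Sym2.mk_isDiag_iff, if_true, mem_insert, mem_singleton] at this
    rcases this with h | h
    · rw [h, zero_pow (by omega)]
    · rw [h, one_pow]
  exact ⟨⟨_, map_eval_genericHermitian_apply_swap hK hdiag⟩, by
    rwa [hermEval, ← eval_minorCombination]⟩

end Evaluation

noncomputable def hermEvalLinearMap (q ℓ : ℕ) (K : Type*) [Field K] :
    (MinorIndex ℓ → K) →ₗ[K]
      ({H : Matrix (Fin ℓ) (Fin ℓ) K // ∀ i j, H j i = (H i j) ^ q} → K) where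
  toFun := hermEval q ℓ K
  map_add' f g := by ext H; simp [hermEval, add_mul, sum_add_distrib]
  map_smul' c f := by ext H; simp [hermEval, mul_sum, mul_assoc]

lemma coe_hermEvalLinearMap (q ℓ : ℕ) (K : Type*) [Field K] :
    ⇑(hermEvalLinearMap q ℓ K) = hermEval q ℓ K := rfl

lemma hermEval_injective {q ℓ : ℕ} {K : Type*} [Field K] [Fintype K]
    (hK : Fintype.card K = q ^ 2) : Function.Injective (hermEval q ℓ K) := by
  rw [← coe_hermEvalLinearMap]
  refine (injective_iff_map_eq_zero _).2 fun f hf => ?_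
  by_contra hne
  obtain ⟨H, hH⟩ := exists_hermEval_ne_zero hK hne
  exact hH (congrFun hf H)

theorem stmt15_general (q ℓ : ℕ)
    (K : Type*) [Field K] [Fintype K] (hK : Fintype.card K = q ^ 2) :
    Function.Injective (hermEval q ℓ K) ∧
      Module.finrank K (Submodule.span K (Set.range (hermEval q ℓ K)))
        = Nat.choose (2 * ℓ) ℓ := by
  have hinj := hermEval_injective (ℓ := ℓ) hK
  refine ⟨hinj, ?_⟩
  rw [← coe_hermEvalLinearMap, ← LinearMap.coe_range, Submodule.span_eq,
    LinearMap.finrank_range_of_inj hinj, Module.finrank_fintype_fun_eq_card, card_minorIndex]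

/-- The evaluation map is injective, and hence the affine Hermitian Grassmann code
    has dimension C(2ℓ, ℓ). -/
theorem stmt15 (q ℓ : ℕ) (hq : ∃ p n : ℕ, p.Prime ∧ 0 < n ∧ q = p ^ n) (hℓ : 1 ≤ ℓ)
    (K : Type*) [Field K] [Fintype K] (hK : Fintype.card K = q ^ 2) :
    Function.Injective (hermEval q ℓ K) ∧
      Module.finrank K (Submodule.span K (Set.range (hermEval q ℓ K)))
        = Nat.choose (2 * ℓ) ℓ :=
  stmt15_general q ℓ K hK
end

section
/- Let q be a prime power, ℓ ≥ 1, and let C ⊆ F_{q^2}^{q^{ℓ²}} be the affine Hermitian Grassmann code (evaluations of F_{q^2}-linear combinations of minors of the generic Hermitian matrix at all ℓ×ℓ Hermitian matrices over F_{q^2}). Then C^q = C, where C^q = {(c₁^q,…,cₙ^q) : c ∈ C}; consequently C has a basis of codewords with all entries in F_q. -/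
/-!
The `q`-power map `σ` is an involutive automorphism of `K`, and on a Hermitian matrix
(`H j i = σ (H i j)`) it sends the minor on rows `I`, columns `J` to the minor on rows `J`,
columns `I`. Hence applying `σ` entrywise to an evaluated combination of minors gives another
such combination, so the code is stable under `σ`. A `σ`-stable subspace of `X → K` is spanned
by its `σ`-fixed vectors, because some `β` has `σ β ≠ β` and every `c` is a `K`-combination of
the fixed vectors `c + σ c` and `β c + σ (β c)`.
-/

theorem FiniteField.exists_pow_ne_self {K : Type*} [Field K] [Fintype K] {q : ℕ}
    (hq : 1 < q) (hqK : q < Fintype.card K) : ∃ β : K, β ^ q ≠ β := by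
  by_contra! hfix
  have hdvd : Fintype.card K - 1 ∣ q - 1 :=
    (FiniteField.forall_pow_eq_one_iff K (q - 1)).mp fun x => Units.ext <| by
      have hx : (x : K) ^ (q - 1) * x = 1 * x := by
        rw [← pow_succ, Nat.sub_add_cancel hq.le, hfix, one_mul]
      simpa using mul_right_cancel₀ x.ne_zero hx
  have := Nat.le_of_dvd (by omega) hdvd
  omega

def RingHom.compLeftₛₗ {K : Type*} [Semiring K] (σ : K →+* K) (X : Type*) :
    (X → K) →ₛₗ[σ] (X → K) where
  toFun c x := σ (c x)
  map_add' c d := funext fun x => map_add σ (c x) (d x)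
  map_smul' a c := funext fun x => map_mul σ a (c x)

@[simp]
theorem RingHom.compLeftₛₗ_apply {K : Type*} [Semiring K] (σ : K →+* K) {X : Type*} (c : X → K)
    (x : X) : σ.compLeftₛₗ X c x = σ (c x) := rfl

section GaloisDescent

variable {K X : Type*} [Field K] {σ : K →+* K} (hσ : ∀ x, σ (σ x) = x)
  (S : Submodule K (X → K)) (hS : S ≤ S.comap (σ.compLeftₛₗ X))
include hσ hS

theorem Submodule.compLeftₛₗ_image_eq : σ.compLeftₛₗ X '' S = S := by
  refine ((Set.image_subset_iff (t := S)).mpr hS).antisymm fun c hc =>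
    ⟨σ.compLeftₛₗ X c, Submodule.mem_comap.mp (hS hc), ?_⟩
  ext x
  simp [hσ]

theorem Submodule.add_compLeftₛₗ_mem_fixed {c : X → K} (hc : c ∈ S) :
    c + σ.compLeftₛₗ X c ∈ {c | c ∈ S ∧ ∀ x, σ (c x) = c x} :=
  ⟨S.add_mem hc (hS hc), fun x => by
    simp only [Pi.add_apply, RingHom.compLeftₛₗ_apply, map_add, hσ, add_comm]⟩

theorem Submodule.span_fixed_eq {β : K} (hβ : σ β ≠ β) :
    Submodule.span K {c | c ∈ S ∧ ∀ x, σ (c x) = c x} = S := by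
  refine le_antisymm (Submodule.span_le.mpr fun c hc => hc.1) fun c hc => ?_
  have hu := S.add_compLeftₛₗ_mem_fixed hσ hS hc
  have hv := S.add_compLeftₛₗ_mem_fixed hσ hS (S.smul_mem β hc)
  -- `β c + σ(β c) - σ(β) (c + σ c) = (β - σ β) c`, and `β - σ β ≠ 0`
  have hc_eq : c = (β - σ β)⁻¹ •
      ((β • c + σ.compLeftₛₗ X (β • c)) - σ β • (c + σ.compLeftₛₗ X c)) := by
    ext x
    have : β - σ β ≠ 0 := sub_ne_zero.mpr hβ.symm
    simp only [Pi.smul_apply, Pi.sub_apply, Pi.add_apply, RingHom.compLeftₛₗ_apply, smul_eq_mul,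
      map_mul]
    field_simp
    ring
  rw [hc_eq]
  exact Submodule.smul_mem _ _ (Submodule.sub_mem _ (Submodule.subset_span hv)
    (Submodule.smul_mem _ _ (Submodule.subset_span hu)))

theorem Submodule.exists_linearIndependent_fixed {β : K} (hβ : σ β ≠ β) :
    ∃ s ⊆ (S : Set (X → K)), (∀ c ∈ s, ∀ x, σ (c x) = c x) ∧
      LinearIndependent K (Subtype.val : s → X → K) ∧ Submodule.span K s = S := by
  obtain ⟨s, hs, hspan, hli⟩ := exists_linearIndependent K {c | c ∈ S ∧ ∀ x, σ (c x) = c x}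
  exact ⟨s, fun c hc => (hs hc).1, fun c hc => (hs hc).2, hli,
    hspan.trans (S.span_fixed_eq hσ hS hβ)⟩

end GaloisDescent

def MinorIndex.transpose (ℓ : ℕ) : MinorIndex ℓ ≃ MinorIndex ℓ where
  toFun p := ⟨(p.1.2, p.1.1), p.2.symm⟩
  invFun p := ⟨(p.1.2, p.1.1), p.2.symm⟩
  left_inv _ := rfl
  right_inv _ := rfl

theorem minorAt_transpose {K : Type*} [Field K] {ℓ : ℕ} {σ : K →+* K}
    {H : Matrix (Fin ℓ) (Fin ℓ) K} (hH : ∀ i j, H j i = σ (H i j)) (p : MinorIndex ℓ) :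
    minorAt H (MinorIndex.transpose ℓ p) = σ (minorAt H p) := by
  obtain ⟨⟨I, J⟩, hIJ⟩ := p
  change (Matrix.of fun a b : Fin J.card => H (J.orderEmbOfFin rfl a) (I.orderEmbOfFin hIJ b)).det
    = σ (Matrix.of fun a b : Fin I.card =>
        H (I.orderEmbOfFin rfl a) (J.orderEmbOfFin hIJ.symm b)).det
  rw [RingHom.map_det, ← Matrix.det_transpose (σ.mapMatrix _),
    ← Matrix.det_reindex_self (finCongr hIJ) (σ.mapMatrix _).transpose]
  congr 1
  ext a b
  simp only [Matrix.reindex_apply, Matrix.submatrix_apply, Matrix.transpose_apply,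
    RingHom.mapMatrix_apply, Matrix.map_apply, Matrix.of_apply, ← hH, finCongr_symm,
    finCongr_apply]
  congr 1

theorem map_hermEval {q ℓ : ℕ} {K : Type*} [Field K] {σ : K →+* K} (hσ : ∀ x, σ x = x ^ q)
    (f : MinorIndex ℓ → K) (H : {H : Matrix (Fin ℓ) (Fin ℓ) K // ∀ i j, H j i = (H i j) ^ q}) :
    σ (hermEval q ℓ K f H) = hermEval q ℓ K (fun p => σ (f (MinorIndex.transpose ℓ p))) H := by
  have hH : ∀ i j, H.1 j i = σ (H.1 i j) := fun i j => (H.2 i j).trans (hσ _).symm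
  simp only [hermEval, map_sum, map_mul, ← minorAt_transpose hH]
  exact (Equiv.sum_comp (MinorIndex.transpose ℓ) _).symm

theorem stmt16_general (q ℓ : ℕ) (hq : ∃ p n : ℕ, p.Prime ∧ 0 < n ∧ q = p ^ n)
    (K : Type*) [Field K] [Fintype K] (hK : Fintype.card K = q ^ 2) :
    (fun c : {H : Matrix (Fin ℓ) (Fin ℓ) K // ∀ i j, H j i = (H i j) ^ q} → K =>
        fun H => (c H) ^ q) ''
      (Submodule.span K (Set.range (hermEval q ℓ K)) : Set _)
      = (Submodule.span K (Set.range (hermEval q ℓ K)) : Set _)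
    ∧ ∃ s : Set ({H : Matrix (Fin ℓ) (Fin ℓ) K // ∀ i j, H j i = (H i j) ^ q} → K),
        s ⊆ (Submodule.span K (Set.range (hermEval q ℓ K)) : Set _)
        ∧ (∀ c ∈ s, ∀ H, (c H) ^ q = c H)
        ∧ LinearIndependent K (Subtype.val : s → _)
        ∧ Submodule.span K s = Submodule.span K (Set.range (hermEval q ℓ K)) := by
  obtain ⟨p, n, hp, hn, rfl⟩ := hq
  have : Fact p.Prime := ⟨hp⟩
  have : CharP K p := charP_of_card_eq_prime_pow (f := n * 2) (by rw [hK, pow_mul])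
  let σ := iterateFrobenius K p n
  have hσσ : ∀ x, σ (σ x) = x := fun x => by
    rw [iterateFrobenius_def, iterateFrobenius_def, ← pow_mul, ← sq, ← hK, FiniteField.pow_card]
  have hq : 1 < p ^ n := Nat.one_lt_pow hn.ne' hp.one_lt
  obtain ⟨β, hβ⟩ := FiniteField.exists_pow_ne_self hq (hK ▸ lt_self_pow₀ hq one_lt_two)
  set S := Submodule.span K (Set.range (hermEval (p ^ n) ℓ K))
  have hS : S ≤ S.comap (σ.compLeftₛₗ _) := Submodule.span_le.mpr <| by
    rintro _ ⟨f, rfl⟩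
    exact Submodule.subset_span
      ⟨_, funext fun H => (map_hermEval (σ := σ) (fun _ => rfl) f H).symm⟩
  exact ⟨S.compLeftₛₗ_image_eq hσσ hS, S.exists_linearIndependent_fixed hσσ hS hβ⟩

/-- The affine Hermitian Grassmann code C satisfies C^q = C (entrywise q-th power),
    and consequently C has a basis of codewords all of whose entries lie in F_q. -/
theorem stmt16 (q ℓ : ℕ) (hq : ∃ p n : ℕ, p.Prime ∧ 0 < n ∧ q = p ^ n) (hℓ : 1 ≤ ℓ)
    (K : Type*) [Field K] [Fintype K] (hK : Fintype.card K = q ^ 2) :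
    (fun c : {H : Matrix (Fin ℓ) (Fin ℓ) K // ∀ i j, H j i = (H i j) ^ q} → K =>
        fun H => (c H) ^ q) ''
      (Submodule.span K (Set.range (hermEval q ℓ K)) : Set _)
      = (Submodule.span K (Set.range (hermEval q ℓ K)) : Set _)
    ∧ ∃ s : Set ({H : Matrix (Fin ℓ) (Fin ℓ) K // ∀ i j, H j i = (H i j) ^ q} → K),
        s ⊆ (Submodule.span K (Set.range (hermEval q ℓ K)) : Set _)
        ∧ (∀ c ∈ s, ∀ H, (c H) ^ q = c H)
        ∧ LinearIndependent K (Subtype.val : s → _)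
        ∧ Submodule.span K s = Submodule.span K (Set.range (hermEval q ℓ K)) :=
  stmt16_general q ℓ hq K hK
end

section
/- Let q = 2 and ℓ ≥ 2. If c is a codeword of the dual of the affine Hermitian Grassmann code C^H(ℓ)^⊥ over F_4, then the support of c cannot have size 3. (Since the all-ones vector lies in C^H(ℓ) and C^H(ℓ)^⊥ is 2-invariant, a weight-3 dual codeword would be a multiple of a binary vector whose three nonzero entries sum to 1 ≠ 0 in F_2.) -/
noncomputable instance (ℓ : ℕ) (K : Type*) [Field K] [Finite K] :
    Fintype {H : Matrix (Fin ℓ) (Fin ℓ) K // ∀ i j, H j i = (H i j) ^ 2} :=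
  Fintype.ofFinite _

/-
Over a field of characteristic 2 the Frobenius `x ↦ x²` maps a minor of a matrix `H` with
`Hᵀ = H.map (· ^ 2)` to the transposed minor, so the code and hence its dual are stable under
squaring coordinates. Testing a dual codeword against the constant `1` and the entry functions
`H ↦ H i j` shows that one supported on two points vanishes. If `c` is a dual codeword supported
on `{x, y, z}`, then `c x + c y + c z = 0`, and `d = c x • c ^ 2 + c x ^ 2 • c` is a dual codeword
vanishing at `x` with `d y = c x c y c z ≠ 0`, a contradiction.
-/

open scoped Matrix

namespace MinorIndex

variable {ℓ : ℕ}

def swap : MinorIndex ℓ ≃ MinorIndex ℓ where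
  toFun m := ⟨(m.1.2, m.1.1), m.2.symm⟩
  invFun m := ⟨(m.1.2, m.1.1), m.2.symm⟩
  left_inv _ := rfl
  right_inv _ := rfl

def empty : MinorIndex ℓ := ⟨(∅, ∅), rfl⟩

def single (i j : Fin ℓ) : MinorIndex ℓ := ⟨({i}, {j}), by simp⟩

end MinorIndex

section Minors

variable {K : Type*} [Field K] {ℓ : ℕ}

lemma minorAt_map (φ : K →+* K) (H : Matrix (Fin ℓ) (Fin ℓ) K) (m : MinorIndex ℓ) :
    minorAt (H.map φ) m = φ (minorAt H m) := by
  rw [minorAt, minorAt, RingHom.map_det]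
  rfl

lemma minorAt_transpose_swap (H : Matrix (Fin ℓ) (Fin ℓ) K) (m : MinorIndex ℓ) :
    minorAt Hᵀ m.swap = minorAt H m := by
  obtain ⟨⟨I, J⟩, h⟩ := m
  unfold minorAt
  rw [← Matrix.det_transpose,
    ← Matrix.det_submatrix_equiv_self (finCongr (h.symm : J.card = I.card))]
  congr 1

lemma minorAt_swap_of_transpose_eq_pow {p : ℕ} [ExpChar K p] {H : Matrix (Fin ℓ) (Fin ℓ) K}
    (hH : ∀ i j, H j i = H i j ^ p) (m : MinorIndex ℓ) :
    minorAt H m.swap = minorAt H m ^ p := by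
  have hHt : H = (H.map (frobenius K p))ᵀ := by
    ext i j
    exact hH j i
  conv_lhs => rw [hHt]
  rw [minorAt_transpose_swap, minorAt_map, frobenius_def]

lemma minorAt_empty (H : Matrix (Fin ℓ) (Fin ℓ) K) : minorAt H MinorIndex.empty = 1 := by
  rw [minorAt]
  have : IsEmpty (Fin (MinorIndex.empty : MinorIndex ℓ).1.1.card) := by
    simp only [MinorIndex.empty, Finset.card_empty]
    infer_instance
  exact Matrix.det_isEmpty

lemma minorAt_single (H : Matrix (Fin ℓ) (Fin ℓ) K) (i j : Fin ℓ) :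
    minorAt H (MinorIndex.single i j) = H i j := by
  rw [minorAt]
  have : Unique (Fin (MinorIndex.single i j).1.1.card) := by
    simp only [MinorIndex.single, Finset.card_singleton]
    infer_instance
  rw [Matrix.det_unique, Matrix.of_apply]
  congr 1 <;> exact Finset.mem_singleton.mp (Finset.orderEmbOfFin_mem _ _ _)

end Minors

abbrev HermMat (q ℓ : ℕ) (K : Type*) [Field K] :=
  {H : Matrix (Fin ℓ) (Fin ℓ) K // ∀ i j, H j i = H i j ^ q}

section HermEval

variable {K : Type*} [Field K] {ℓ : ℕ}

lemma hermEval_single (q : ℕ) [DecidableEq (MinorIndex ℓ)] (m : MinorIndex ℓ)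
    (H : HermMat q ℓ K) :
    hermEval q ℓ K (Pi.single m 1) H = minorAt H.1 m := by
  simp [hermEval, Pi.single_apply]

lemma hermEval_pow (p : ℕ) [ExpChar K p] (f : MinorIndex ℓ → K) (H : HermMat p ℓ K) :
    hermEval p ℓ K f H ^ p = hermEval p ℓ K (fun m => f m.swap ^ p) H := by
  rw [hermEval, hermEval, ← frobenius_def, map_sum, ← Equiv.sum_comp MinorIndex.swap]
  refine Finset.sum_congr rfl fun m _ => ?_
  rw [map_mul, frobenius_def, frobenius_def, ← minorAt_swap_of_transpose_eq_pow H.2]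
  rfl

end HermEval

lemma Fintype.sum_eq_add_add {α M : Type*} [Fintype α] [DecidableEq α] [AddCommMonoid M]
    {f : α → M} (x y z : α) (hxy : x ≠ y) (hxz : x ≠ z) (hyz : y ≠ z)
    (h : ∀ a, a ≠ x ∧ a ≠ y ∧ a ≠ z → f a = 0) :
    ∑ a, f a = f x + f y + f z := by
  rw [← Finset.sum_subset (Finset.subset_univ {x, y, z}), Finset.sum_insert (by simp [hxy, hxz]),
    Finset.sum_pair hyz, add_assoc]
  intro a _ ha
  simp only [Finset.mem_insert, Finset.mem_singleton, not_or] at ha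
  exact h a ha

section DualCode

variable (ℓ : ℕ) (K : Type*) [Field K] [Fintype K]

/-- The dual of the affine Hermitian Grassmann code `C^H(ℓ)` over `K`, for `q = 2`. -/
def dualCode : Submodule K (HermMat 2 ℓ K → K) where
  carrier := {c | ∀ f, ∑ H, c H * hermEval 2 ℓ K f H = 0}
  add_mem' {c d} hc hd f := by
    simp only [Pi.add_apply, add_mul, Finset.sum_add_distrib, hc f, hd f, add_zero]
  zero_mem' f := by simp
  smul_mem' a c hc f := by
    simp only [Pi.smul_apply, smul_eq_mul, mul_assoc, ← Finset.mul_sum, hc f, mul_zero]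

variable {ℓ K} {c : HermMat 2 ℓ K → K}

lemma sq_mem_dualCode [CharP K 2] (hc : c ∈ dualCode ℓ K) : c ^ 2 ∈ dualCode ℓ K := by
  intro f
  set g : MinorIndex ℓ → K := fun m => (frobeniusEquiv K 2).symm (f m.swap)
  have hg : ∀ H, hermEval 2 ℓ K g H ^ 2 = hermEval 2 ℓ K f H := fun H => by
    rw [hermEval_pow]
    congr 1
    funext m
    exact frobenius_apply_frobeniusEquiv_symm K 2 (f m)
  calc ∑ H, (c ^ 2) H * hermEval 2 ℓ K f H
      = (∑ H, c H * hermEval 2 ℓ K g H) ^ 2 := by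
        simp only [CharTwo.sum_sq, mul_pow, hg, Pi.pow_apply]
    _ = 0 := by rw [hc g, zero_pow two_ne_zero]

lemma sum_eq_zero_of_mem_dualCode (hc : c ∈ dualCode ℓ K) : ∑ H, c H = 0 := by
  classical
  simpa only [hermEval_single, minorAt_empty, mul_one] using hc (Pi.single .empty 1)

lemma sum_smul_eq_zero_of_mem_dualCode (hc : c ∈ dualCode ℓ K) : ∑ H, c H • H.1 = 0 := by
  classical
  ext i j
  simpa only [Matrix.sum_apply, Matrix.smul_apply, Matrix.zero_apply, smul_eq_mul,
    hermEval_single, minorAt_single] using hc (Pi.single (.single i j) 1)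

lemma apply_eq_zero_of_mem_dualCode_of_support_subset_pair (hc : c ∈ dualCode ℓ K)
    {y z : HermMat 2 ℓ K} (hyz : y ≠ z) (h : ∀ H, H ≠ y ∧ H ≠ z → c H = 0) : c y = 0 := by
  have hcz : c z = -c y :=
    eq_neg_of_add_eq_zero_right <| (Fintype.sum_eq_add y z hyz h).symm.trans
      (sum_eq_zero_of_mem_dualCode hc)
  have hmat : c y • (y.1 - z.1) = 0 :=
    calc c y • (y.1 - z.1) = c y • y.1 + c z • z.1 := by
          rw [hcz, neg_smul, smul_sub, sub_eq_add_neg]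
      _ = ∑ H, c H • H.1 :=
          (Fintype.sum_eq_add (f := fun H => c H • H.1) y z hyz fun H hH => by
            rw [h H hH, zero_smul]).symm
      _ = 0 := sum_smul_eq_zero_of_mem_dualCode hc
  refine (smul_eq_zero.mp hmat).resolve_right fun hsub => hyz ?_
  exact Subtype.ext (sub_eq_zero.mp hsub)

lemma ncard_support_ne_three_of_mem_dualCode [CharP K 2] (hc : c ∈ dualCode ℓ K) :
    {H | c H ≠ 0}.ncard ≠ 3 := by
  classical
  intro h3
  obtain ⟨x, y, z, hxy, hxz, hyz, hs⟩ := Set.ncard_eq_three.mp h3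
  have hmem : ∀ H, c H ≠ 0 ↔ H = x ∨ H = y ∨ H = z := fun H => by
    simpa using Set.ext_iff.mp hs H
  have hzero : ∀ H, H ≠ x ∧ H ≠ y ∧ H ≠ z → c H = 0 := fun H hH =>
    by_contra fun hcH => by rcases (hmem H).mp hcH with rfl | rfl | rfl <;> simp at hH
  have hsum : c x + c y + c z = 0 := by
    rw [← Fintype.sum_eq_add_add x y z hxy hxz hyz hzero]
    exact sum_eq_zero_of_mem_dualCode hc
  set d := c x • c ^ 2 + c x ^ 2 • c with hd
  have hd_apply : ∀ H, d H = c x * c H * (c H + c x) := fun H => by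
    simp only [hd, Pi.add_apply, Pi.smul_apply, Pi.pow_apply, smul_eq_mul]
    ring
  have hd_mem : d ∈ dualCode ℓ K :=
    add_mem (Submodule.smul_mem _ _ (sq_mem_dualCode hc)) (Submodule.smul_mem _ _ hc)
  have hd_supp : ∀ H, H ≠ y ∧ H ≠ z → d H = 0 := fun H hH => by
    by_cases hHx : H = x
    · rw [hHx, hd_apply, CharTwo.add_self_eq_zero, mul_zero]
    · rw [hd_apply, hzero H ⟨hHx, hH⟩, mul_zero, zero_mul]
  have hdy : d y = c x * c y * c z := by
    rw [hd_apply, ← CharTwo.add_eq_zero.mp (show c y + c x + c z = 0 by linear_combination hsum)]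
  have hu : c x * c y * c z ≠ 0 :=
    mul_ne_zero (mul_ne_zero ((hmem x).mpr (by simp)) ((hmem y).mpr (by simp)))
      ((hmem z).mpr (by simp))
  exact hu (hdy ▸ apply_eq_zero_of_mem_dualCode_of_support_subset_pair hd_mem hyz hd_supp)

end DualCode

lemma charP_two_of_card_eq_two_pow {K : Type*} [Field K] [Fintype K] {n : ℕ} (hn : n ≠ 0)
    (hK : Fintype.card K = 2 ^ n) : CharP K 2 := by
  have h : ((2 ^ n : ℕ) : K) = 0 := hK ▸ FiniteField.cast_card_eq_zero K
  push_cast at h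
  exact CharTwo.of_one_ne_zero_of_two_eq_zero one_ne_zero (pow_eq_zero_iff hn |>.mp h)

theorem stmt17_general (ℓ : ℕ)
    (K : Type*) [Field K] [Fintype K] (hK : Fintype.card K = 4)
    (c : {H : Matrix (Fin ℓ) (Fin ℓ) K // ∀ i j, H j i = (H i j) ^ 2} → K)
    (hdual : ∀ f : MinorIndex ℓ → K,
      ∑ H : {H : Matrix (Fin ℓ) (Fin ℓ) K // ∀ i j, H j i = (H i j) ^ 2},
        c H * hermEval 2 ℓ K f H = 0) :
    {H | c H ≠ 0}.ncard ≠ 3 := by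
  have : CharP K 2 := charP_two_of_card_eq_two_pow (n := 2) two_ne_zero hK
  exact ncard_support_ne_three_of_mem_dualCode hdual

/-- For q = 2 (so the code is over F₄), no codeword of the dual of the affine
    Hermitian Grassmann code has support of size 3. -/
theorem stmt17 (ℓ : ℕ) (hℓ : 2 ≤ ℓ)
    (K : Type*) [Field K] [Fintype K] (hK : Fintype.card K = 4)
    (c : {H : Matrix (Fin ℓ) (Fin ℓ) K // ∀ i j, H j i = (H i j) ^ 2} → K)
    (hdual : ∀ f : MinorIndex ℓ → K,
      ∑ H : {H : Matrix (Fin ℓ) (Fin ℓ) K // ∀ i j, H j i = (H i j) ^ 2},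
        c H * hermEval 2 ℓ K f H = 0) :
    {H | c H ≠ 0}.ncard ≠ 3 :=
  stmt17_general ℓ K hK c hdual
end

section
/- Let q be a prime power, ℓ ≥ 1, and let I_H be the ideal in F_{q^2}[X_{i,j} : 1 ≤ i,j ≤ ℓ] generated by X_{i,j}^q − X_{j,i} and X_{i,j}^{q²} − X_{i,j} for i < j, together with X_{i,i}^q − X_{i,i}. Let F(ℓ) be the F_{q^2}-span of all minors det_{I,J}(X), I,J ⊆ [ℓ], |I| = |J|. Then F(ℓ) ∩ I_H = {0}. -/
/-!
Substitute `X (i, j) ↦ X (i, j)`, `X (j, i) ↦ X (i, j) ^ q` for `i < j` and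
`X (i, i) ↦ X (i, i) ^ (q + 1)`. Every point of `K^(ℓ × ℓ)` is then sent to a Hermitian
matrix (`x ^ (q + 1)` lies in `𝔽_q`), so the image of an element of `I_H` vanishes everywhere;
its degree in each variable is at most `q + 1 < q ^ 2`, so it is zero. Minors are multilinear,
and on multilinear monomials the substitution is injective: the new exponent of `X (i, j)` is
the two-digit base-`q` number `m (i, j) + q * m (j, i)`. Hence `f = 0`.
-/

open MvPolynomial

universe u

namespace MvPolynomial

theorem eq_zero_of_forall_eval_eq_zero {σ : Type*} {K : Type u} [Finite σ] [Field K] [Fintype K]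
    {p : MvPolynomial σ K} (h : ∀ v : σ → K, eval v p = 0)
    (hp : p ∈ restrictDegree σ K (Fintype.card K - 1)) : p = 0 := by
  -- `eq_zero_of_eval_eq_zero` wants the variables in the universe of `K`.
  obtain ⟨n, ⟨e⟩⟩ := Finite.exists_equiv_fin σ
  let e' : σ ≃ ULift.{u} (Fin n) := e.trans Equiv.ulift.symm
  apply rename_injective e' e'.injective
  rw [map_zero]
  refine eq_zero_of_eval_eq_zero _ _ _ (fun v => by rw [eval_rename]; exact h _) ?_
  rw [mem_restrictDegree] at hp ⊢
  intro s hs i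
  rw [support_rename_of_injective e'.injective] at hs
  obtain ⟨m, hm, rfl⟩ := Finset.mem_image.mp hs
  rw [Finsupp.mapDomain_equiv_apply]
  exact hp m hm _

section CommSemiring

variable {R : Type*} [CommSemiring R]

theorem prod_X_mem_restrictDegree_one {ι σ : Type*} [Fintype ι] {g : ι → σ}
    (hg : Function.Injective g) :
    ∏ i, (X (g i) : MvPolynomial σ R) ∈ restrictDegree σ R 1 := by
  classical
  rw [show ∏ i, (X (g i) : MvPolynomial σ R) = ∏ x ∈ Finset.univ.map ⟨g, hg⟩, X x from
    by rw [Finset.prod_map]; rfl]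
  simp only [X, ← monomial_sum_one]
  refine (monomial_mem_restrictSupport R).mpr (Or.inl fun i => ?_)
  rw [Finsupp.finsetSum_apply]
  simp only [Finsupp.single_apply, Finset.sum_ite_eq']
  split_ifs <;> simp

theorem aeval_monomial_one_monomial {σ τ : Type*} (v : σ → τ →₀ ℕ) (m : σ →₀ ℕ)
    (c : R) :
    aeval (fun p => (monomial (v p) 1 : MvPolynomial τ R)) (monomial m c) =
      monomial (Finsupp.linearCombination ℕ v m) c := by
  simp only [aeval_monomial, monomial_pow, one_pow, Finsupp.linearCombination_apply,
    monomial_finsupp_sum_index, algebraMap_eq]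

theorem aeval_monomial_one_mem_restrictSupport {σ τ : Type*} (v : σ → τ →₀ ℕ)
    {s : Set (σ →₀ ℕ)} {f : MvPolynomial σ R} (hf : f ∈ restrictSupport R s) :
    aeval (fun p => (monomial (v p) 1 : MvPolynomial τ R)) f ∈
      restrictSupport R (Finsupp.linearCombination ℕ v '' s) := by
  rw [f.as_sum, map_sum]
  refine Submodule.sum_mem _ fun m hm => ?_
  rw [aeval_monomial_one_monomial, monomial_mem_restrictSupport]
  exact Or.inl ⟨m, hf hm, rfl⟩

theorem eq_zero_of_aeval_monomial_one_eq_zero {σ τ : Type*} (v : σ → τ →₀ ℕ)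
    {f : MvPolynomial σ R} (hinj : Set.InjOn (Finsupp.linearCombination ℕ v) f.support)
    (h : aeval (fun p => (monomial (v p) 1 : MvPolynomial τ R)) f = 0) : f = 0 := by
  classical
  ext m
  rw [coeff_zero]
  by_contra hm
  have hcoeff : coeff (Finsupp.linearCombination ℕ v m)
      (aeval (fun p => (monomial (v p) 1 : MvPolynomial τ R)) f) = coeff m f := by
    conv_lhs => rw [f.as_sum, map_sum, coeff_sum]
    rw [Finset.sum_eq_single m]
    · rw [aeval_monomial_one_monomial, coeff_monomial, if_pos rfl]
    · intro m' hm' hne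
      rw [aeval_monomial_one_monomial, coeff_monomial,
        if_neg fun h => hne (hinj hm' (mem_support_iff.mpr hm) h)]
    · intro hm'
      exact absurd (notMem_support_iff.mp hm') hm
  rw [h, coeff_zero] at hcoeff
  exact hm hcoeff.symm

end CommSemiring

theorem det_X_mem_restrictDegree_one {R m α β : Type*} [CommRing R] [Fintype m]
    [DecidableEq m]
    (r : m → α) {c : m → β} (hc : Function.Injective c) :
    (Matrix.of fun a b => (X (r a, c b) : MvPolynomial (α × β) R)).det ∈
      restrictDegree (α × β) R 1 := by
  rw [Matrix.det_apply]
  refine Submodule.sum_mem _ fun σ _ => ?_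
  rw [Units.smul_def]
  refine Submodule.smul_of_tower_mem _ _ (prod_X_mem_restrictDegree_one ?_)
  exact fun i j h => hc (congrArg Prod.snd h)

end MvPolynomial

section Minors

variable (n : Type*) [LinearOrder n] (R : Type*) [CommRing R]

def minors : Set (MvPolynomial (n × n) R) :=
  {g | ∃ (I J : Finset n) (h : I.card = J.card),
    g = (Matrix.of fun a b : Fin I.card =>
      (X (I.orderEmbOfFin rfl a, J.orderEmbOfFin h.symm b) : MvPolynomial (n × n) R)).det}

theorem span_minors_le_restrictDegree_one :
    Submodule.span R (minors n R) ≤ restrictDegree (n × n) R 1 :=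
  Submodule.span_le.mpr <| by
    rintro _ ⟨I, J, h, rfl⟩
    exact det_X_mem_restrictDegree_one _ (J.orderEmbOfFin h.symm).injective

end Minors

section Hermitian

variable {n : Type*} [LinearOrder n] (q : ℕ)

noncomputable def hermitianExponent (p : n × n) : n × n →₀ ℕ :=
  if p.1 < p.2 then Finsupp.single p 1
  else if p.2 < p.1 then Finsupp.single p.swap q
  else Finsupp.single p (q + 1)

theorem hermitianExponent_apply_eq_zero {p r : n × n} (h : p ≠ r) (hswap : p.swap ≠ r) :
    hermitianExponent q p r = 0 := by
  unfold hermitianExponent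
  split_ifs <;> exact Finsupp.single_eq_of_ne (Ne.symm ‹_›)

theorem hermitianExponent_apply_of_gt {i j : n} (hij : j < i) (p : n × n) :
    hermitianExponent q p (i, j) = 0 := by
  obtain ⟨a, b⟩ := p
  unfold hermitianExponent
  split_ifs <;> refine Finsupp.single_eq_of_ne ?_ <;>
    simp only [ne_eq, Prod.ext_iff, Prod.swap_prod_mk] <;> order

noncomputable def hermitianSubst (R : Type*) [CommSemiring R] :
    MvPolynomial (n × n) R →ₐ[R] MvPolynomial (n × n) R :=
  aeval fun p => monomial (hermitianExponent q p) 1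

noncomputable def hermitianPoint {K : Type*} [CommSemiring K] (v : n × n → K) (p : n × n) : K :=
  if p.1 < p.2 then v p else if p.2 < p.1 then v p.swap ^ q else v p ^ (q + 1)

theorem eval_hermitianSubst {K : Type*} [CommSemiring K] (v : n × n → K)
    (f : MvPolynomial (n × n) K) :
    eval v (hermitianSubst q K f) = eval (hermitianPoint q v) f := by
  rw [← aeval_eq_eval, ← aeval_eq_eval]
  change ((aeval v).comp (hermitianSubst q K)) f = _
  rw [hermitianSubst, comp_aeval]
  refine congrArg (fun w => aeval w f) (funext fun p => ?_)
  unfold hermitianPoint hermitianExponent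
  split_ifs <;>
    simp only [aeval_monomial, map_one, one_mul, pow_zero, pow_one, Finsupp.prod_single_index]

def hermitianGenerators (R : Type*) [CommRing R] : Set (MvPolynomial (n × n) R) :=
  {g | ∃ i j : n, i < j ∧
      (g = X (i, j) ^ q - X (j, i) ∨ g = X (i, j) ^ (q ^ 2) - X (i, j))} ∪
    {g | ∃ i : n, g = X (i, i) ^ q - X (i, i)}

theorem eval_hermitianPoint_eq_zero {K : Type*} [Field K] [Fintype K]
    (hK : Fintype.card K = q ^ 2) (v : n × n → K)
    {f : MvPolynomial (n × n) K} (hf : f ∈ Ideal.span (hermitianGenerators q K)) :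
    eval (hermitianPoint q v) f = 0 := by
  have frobenius_sq (x : K) : x ^ q ^ 2 = x := hK ▸ FiniteField.pow_card x
  refine (Ideal.span_le (I := RingHom.ker (eval (hermitianPoint q v))) |>.mpr ?_ hf)
  rintro g (⟨i, j, hij, rfl | rfl⟩ | ⟨i, rfl⟩) <;>
    simp only [SetLike.mem_coe, RingHom.mem_ker, map_sub, map_pow, eval_X, sub_eq_zero]
  · simp [hermitianPoint, hij, not_lt_of_gt hij]
  · simp [hermitianPoint, hij, frobenius_sq]
  · simp only [hermitianPoint, lt_irrefl, if_false]
    rw [← pow_mul, show (q + 1) * q = q ^ 2 + q by ring, pow_add, frobenius_sq, pow_succ']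

variable [Fintype n]

theorem linearCombination_hermitianExponent_apply (m : n × n →₀ ℕ) (r : n × n) :
    Finsupp.linearCombination ℕ (hermitianExponent q) m r =
      ∑ p, m p * hermitianExponent q p r := by
  rw [Finsupp.linearCombination_apply, Finsupp.sum_fintype _ _ (by simp),
    Finsupp.finsetSum_apply]
  rfl

theorem linearCombination_hermitianExponent_apply_of_lt (m : n × n →₀ ℕ) {i j : n}
    (hij : i < j) :
    Finsupp.linearCombination ℕ (hermitianExponent q) m (i, j) = m (i, j) + q * m (j, i) := by
  rw [linearCombination_hermitianExponent_apply, Fintype.sum_eq_add (i, j) (j, i)]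
  · simp [hermitianExponent, hij, not_lt_of_gt hij, mul_comm]
  · simp [hij.ne]
  · rintro p ⟨h₁, h₂⟩
    rw [hermitianExponent_apply_eq_zero q h₁ fun h => h₂ (by rw [← Prod.swap_swap p, h]; rfl),
      mul_zero]

theorem linearCombination_hermitianExponent_apply_self (m : n × n →₀ ℕ) (i : n) :
    Finsupp.linearCombination ℕ (hermitianExponent q) m (i, i) = (q + 1) * m (i, i) := by
  rw [linearCombination_hermitianExponent_apply, Fintype.sum_eq_single (i, i)]
  · simp [hermitianExponent, mul_comm]
  · intro p hp
    rw [hermitianExponent_apply_eq_zero q hp fun h => hp (by rw [← Prod.swap_swap p, h]; rfl),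
      mul_zero]

theorem linearCombination_hermitianExponent_apply_of_gt (m : n × n →₀ ℕ) {i j : n}
    (hij : j < i) : Finsupp.linearCombination ℕ (hermitianExponent q) m (i, j) = 0 := by
  simp [linearCombination_hermitianExponent_apply, hermitianExponent_apply_of_gt q hij]

theorem linearCombination_hermitianExponent_le {m : n × n →₀ ℕ} (hm : ∀ p, m p ≤ 1)
    (r : n × n) : Finsupp.linearCombination ℕ (hermitianExponent q) m r ≤ q + 1 := by
  obtain ⟨i, j⟩ := r
  rcases lt_trichotomy i j with hij | rfl | hij
  · rw [linearCombination_hermitianExponent_apply_of_lt q m hij]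
    nlinarith [hm (i, j), hm (j, i)]
  · rw [linearCombination_hermitianExponent_apply_self]
    nlinarith [hm (i, i)]
  · rw [linearCombination_hermitianExponent_apply_of_gt q m hij]
    exact Nat.zero_le _

theorem injOn_linearCombination_hermitianExponent (hq : 1 < q) :
    Set.InjOn (Finsupp.linearCombination ℕ (hermitianExponent q))
      {m : n × n →₀ ℕ | ∀ p, m p ≤ 1} := by
  intro m hm m' hm' h
  have upper {i j : n} (hij : i < j) : m (i, j) = m' (i, j) ∧ m (j, i) = m' (j, i) := by
    have e := DFunLike.congr_fun h (i, j)
    rw [linearCombination_hermitianExponent_apply_of_lt q m hij,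
      linearCombination_hermitianExponent_apply_of_lt q m' hij] at e
    have := hm (j, i); have := hm' (j, i); have := hm (i, j); have := hm' (i, j)
    interval_cases m (j, i) <;> interval_cases m' (j, i) <;> omega
  ext ⟨i, j⟩
  rcases lt_trichotomy i j with hij | rfl | hij
  · exact (upper hij).1
  · have e := DFunLike.congr_fun h (i, i)
    rw [linearCombination_hermitianExponent_apply_self,
      linearCombination_hermitianExponent_apply_self] at e
    exact Nat.eq_of_mul_eq_mul_left q.succ_pos e
  · exact (upper hij).2

theorem hermitianSubst_mem_restrictDegree {R : Type*} [CommSemiring R]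
    {f : MvPolynomial (n × n) R} (hf : f ∈ restrictDegree (n × n) R 1) :
    hermitianSubst q R f ∈ restrictDegree (n × n) R (q + 1) := by
  refine restrictSupport_mono R ?_ (aeval_monomial_one_mem_restrictSupport _ hf)
  rintro _ ⟨m, hm, rfl⟩
  exact linearCombination_hermitianExponent_le q hm

theorem eq_zero_of_hermitianSubst_eq_zero {R : Type*} [CommSemiring R] (hq : 1 < q)
    {f : MvPolynomial (n × n) R} (hf : f ∈ restrictDegree (n × n) R 1)
    (h : hermitianSubst q R f = 0) : f = 0 :=
  eq_zero_of_aeval_monomial_one_eq_zero _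
    ((injOn_linearCombination_hermitianExponent q hq).mono
      fun m hm => (mem_restrictDegree _ _ _).mp hf m hm) h

end Hermitian

theorem stmt18_general (q ℓ : ℕ)
    (K : Type*) [Field K] [Fintype K] (hK : Fintype.card K = q ^ 2)
    (f : MvPolynomial (Fin ℓ × Fin ℓ) K)
    (hspan : f ∈ Submodule.span K
      {g : MvPolynomial (Fin ℓ × Fin ℓ) K |
        ∃ (I J : Finset (Fin ℓ)) (h : I.card = J.card),
          g = (Matrix.of fun a b : Fin I.card =>
            (X (I.orderEmbOfFin rfl a, J.orderEmbOfFin h.symm b) :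
              MvPolynomial (Fin ℓ × Fin ℓ) K)).det})
    (hideal : f ∈ Ideal.span
      ({g | ∃ i j : Fin ℓ, i < j ∧
          (g = X (i, j) ^ q - X (j, i) ∨ g = X (i, j) ^ (q ^ 2) - X (i, j))}
        ∪ {g | ∃ i : Fin ℓ, g = X (i, i) ^ q - X (i, i)} :
        Set (MvPolynomial (Fin ℓ × Fin ℓ) K))) :
    f = 0 := by
  have hq : 1 < q := by
    have := hK ▸ Fintype.one_lt_card (α := K)
    exact (Nat.one_lt_pow_iff two_ne_zero).mp this
  have hmultilinear : f ∈ restrictDegree _ K 1 := span_minors_le_restrictDegree_one _ K hspan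
  refine eq_zero_of_hermitianSubst_eq_zero q hq hmultilinear
    (eq_zero_of_forall_eval_eq_zero (fun v => ?_) ?_)
  · rw [eval_hermitianSubst]
    exact eval_hermitianPoint_eq_zero q hK v hideal
  · refine restrictSupport_mono K (fun m hm i => (hm i).trans ?_)
      (hermitianSubst_mem_restrictDegree q hmultilinear)
    have : q + 1 + 1 ≤ q ^ 2 := by nlinarith
    omega

/-- The span of the minors of the generic matrix meets the Hermitian ideal I_H
    only in 0. -/
theorem stmt18 (q ℓ : ℕ) (hq : ∃ p n : ℕ, p.Prime ∧ 0 < n ∧ q = p ^ n) (hℓ : 1 ≤ ℓ)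
    (K : Type*) [Field K] [Fintype K] (hK : Fintype.card K = q ^ 2)
    (f : MvPolynomial (Fin ℓ × Fin ℓ) K)
    (hspan : f ∈ Submodule.span K
      {g : MvPolynomial (Fin ℓ × Fin ℓ) K |
        ∃ (I J : Finset (Fin ℓ)) (h : I.card = J.card),
          g = (Matrix.of fun a b : Fin I.card =>
            (X (I.orderEmbOfFin rfl a, J.orderEmbOfFin h.symm b) :
              MvPolynomial (Fin ℓ × Fin ℓ) K)).det})
    (hideal : f ∈ Ideal.span
      ({g | ∃ i j : Fin ℓ, i < j ∧
          (g = X (i, j) ^ q - X (j, i) ∨ g = X (i, j) ^ (q ^ 2) - X (i, j))}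
        ∪ {g | ∃ i : Fin ℓ, g = X (i, i) ^ q - X (i, i)} :
        Set (MvPolynomial (Fin ℓ × Fin ℓ) K))) :
    f = 0 :=
  stmt18_general q ℓ K hK f hspan hideal
end
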